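/- arXiv:1407.6796 — 5 statements merged into one kernel-verified Lean document; each statement's English description precedes it below -/
import Mathlib

section
/- The ℚ-vector space MD^♯ is closed under multiplication; that is, for any integers l, m ≥ 0 and any s_1,…,s_l ≥ 2 and r_1,…,r_m ≥ 2, the product [s_1,…,s_l]·[r_1,…,r_m] is a ℚ-linear combination of brackets [t_1,…,t_n] with all t_i ≥ 2. In particular MD^♯ is a ℚ-subalgebra of ℚ⟦q⟧. -/
open Polynomial

open scoped Classical

/-- The bracket `[s_1,…,s_l]` of Bachmann–Kühn: the generating series of multiple
divisor sums, defined coefficientwise. -/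
noncomputable def bracket (l : ℕ) (s : Fin l → ℕ) : PowerSeries ℚ :=
  PowerSeries.mk fun N =>
    (∏ j, ((s j - 1).factorial : ℚ))⁻¹ *
      ∑ uv ∈ ((Finset.Iic fun _ => N : Finset (Fin l → ℕ)) ×ˢ
            (Finset.Iic fun _ => N : Finset (Fin l → ℕ))).filter
          (fun uv => StrictAnti uv.1 ∧ (∀ j, 0 < uv.1 j) ∧ (∀ j, 0 < uv.2 j) ∧
            ∑ j, uv.1 j * uv.2 j = N),
        ∏ j, (uv.2 j : ℚ) ^ (s j - 1)

/-- `MD^♯`: the ℚ-span of all brackets with all entries ≥ 2 (including `[∅] = 1`). -/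
noncomputable def MDsharp : Submodule ℚ (PowerSeries ℚ) :=
  Submodule.span ℚ {f | ∃ (l : ℕ) (s : Fin l → ℕ), (∀ j, 2 ≤ s j) ∧ f = bracket l s}

/-- The q-analogue `Z_Q(s_1,…,s_l) = Σ_{n_1 > … > n_l > 0} ∏_j Q_{s_j}(q^{n_j})/(1-q^{n_j})^{s_j}`,
defined coefficientwise (the coefficient of `q^N` only receives contributions from
tuples with all `n_j ≤ N`, since `Q_s(0) = 0`). -/
noncomputable def ZQ (Q : ℕ → Polynomial ℚ) (l : ℕ) (s : Fin l → ℕ) : PowerSeries ℚ :=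
  PowerSeries.mk fun N =>
    ∑ n ∈ ((Finset.Iic fun _ => N : Finset (Fin l → ℕ))).filter
        (fun n => StrictAnti n ∧ ∀ j, 0 < n j),
      PowerSeries.coeff N
        (∏ j, Polynomial.aeval ((PowerSeries.X : PowerSeries ℚ) ^ n j) (Q (s j)) *
          ((1 - (PowerSeries.X : PowerSeries ℚ) ^ n j) ^ s j)⁻¹)

/-- Okounkov's polynomials `Q^O_s`. -/
noncomputable def QO (s : ℕ) : Polynomial ℚ :=
  if s % 2 = 0 then X ^ (s / 2) else X ^ ((s - 1) / 2) * (1 + X)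

/-- The ℚ-span of Okounkov's q-multiple zeta values. -/
noncomputable def qMZV : Submodule ℚ (PowerSeries ℚ) :=
  Submodule.span ℚ {f | ∃ (l : ℕ) (s : Fin l → ℕ), (∀ j, 2 ≤ s j) ∧ f = ZQ QO l s}

/-- Eulerian numbers `A(n,m)`. -/
def eulerianNumber (n m : ℕ) : ℚ :=
  ∑ j ∈ Finset.range (m + 1), (-1 : ℚ) ^ j * ((n + 1).choose j) * ((m + 1 - j : ℕ) : ℚ) ^ n

/-- The normalized Eulerian polynomials `Q^E_s(t) = t·P_{s-1}(t)/(s-1)!` (for `s ≥ 2`). -/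
noncomputable def QE (s : ℕ) : Polynomial ℚ :=
  (((s - 1).factorial : ℚ)⁻¹) •
    ∑ m ∈ Finset.range (s - 1), C (eulerianNumber (s - 1) m) * X ^ (m + 1)

/-- The coefficients `λ^j_{a,b}` (with Mathlib's `bernoulli`, for which `B_1 = -1/2`). -/
def lam (a b j : ℕ) : ℚ :=
  (-1 : ℚ) ^ (b - 1) * ((a + b - j - 1).choose (a - j)) * _root_.bernoulli (a + b - j) /
    (a + b - j).factorial

/-- The binomial polynomial `C(t+k-1-i, k-1) = (t+k-1-i)(t+k-2-i)⋯(t+1-i)/(k-1)!`. -/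
noncomputable def binomPoly (k i : ℕ) : Polynomial ℚ :=
  (((k - 1).factorial : ℚ)⁻¹) •
    ∏ a ∈ Finset.range (k - 1), (X + C ((k : ℚ) - 1 - (i : ℚ) - (a : ℚ)))

/-- The numbers `b^k_{i,j}`, defined by `Σ_j (b^k_{i,j}/j!) t^j = C(t+k-1-i, k-1)`. -/
noncomputable def bcoef (k i j : ℕ) : ℚ := (j.factorial : ℚ) * (binomPoly k i).coeff j

/-- The operator `d = q·(d/dq)` on `ℚ⟦q⟧`. -/
noncomputable def qd (f : PowerSeries ℚ) : PowerSeries ℚ :=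
  PowerSeries.mk fun N => (N : ℚ) * PowerSeries.coeff N f

noncomputable def Hs (a n : ℕ) : PowerSeries ℚ :=
  PowerSeries.mk fun N => if n ∣ N ∧ 0 < N then ((N / n : ℕ) : ℚ) ^ a else 0

noncomputable def Bt : (l : ℕ) → (Fin l → ℕ) → ℕ → PowerSeries ℚ
  | 0, _, _ => 1
  | (l+1), e, M => ∑ n ∈ Finset.Icc 1 M, Hs (e 0) n * Bt l (fun j => e j.succ) (n-1)

noncomputable def Spoly (p : ℕ) : Polynomial ℚ :=
  ∑ i ∈ Finset.range (p+1), C (_root_.bernoulli i * ((p+1).choose i) / (p+1)) * X^(p+1-i)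

lemma Spoly_eval (p n : ℕ) : (Spoly p).eval (n:ℚ) = ∑ k ∈ Finset.range n, (k:ℚ)^p := by
  rw [sum_range_pow n p, Spoly]
  simp only [eval_finset_sum, eval_mul, eval_C, eval_pow, eval_X]
  apply Finset.sum_congr rfl
  intro i _
  ring

lemma Spoly_coeff_zero (p : ℕ) : (Spoly p).coeff 0 = 0 := by
  rw [Spoly, finset_sum_coeff]
  apply Finset.sum_eq_zero
  intro i hi
  rw [coeff_C_mul, coeff_X_pow]
  have : p + 1 - i ≠ 0 := by
    simp only [Finset.mem_range] at hi; omega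
  simp [Ne.symm this]

noncomputable def Tpoly (a b : ℕ) : Polynomial ℚ :=
  ∑ k ∈ Finset.range (b+1), C ((b.choose k : ℚ) * (-1)^k) * X^(b-k) * Spoly (a+k)

lemma Tpoly_coeff_zero (a b : ℕ) : (Tpoly a b).coeff 0 = 0 := by
  rw [Tpoly, finset_sum_coeff]
  apply Finset.sum_eq_zero
  intro k hk
  rw [mul_assoc, coeff_C_mul, mul_comm (X^(b-k)), coeff_mul_X_pow']
  rcases Nat.eq_zero_or_pos (b-k) with h | h
  · simp only [Finset.mem_range] at hk
    simp [h, Spoly_coeff_zero]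
  · simp [Nat.not_le.mpr h]

lemma Tpoly_eval (a b V : ℕ) :
    (Tpoly a b).eval (V:ℚ) = ∑ v ∈ Finset.range V, (v:ℚ)^a * ((V:ℚ)-(v:ℚ))^b := by
  have h : ∀ v ∈ Finset.range V, (v:ℚ)^a * ((V:ℚ)-(v:ℚ))^b
      = ∑ k ∈ Finset.range (b+1), (v:ℚ)^(a+k) * ((b.choose k : ℚ) * (-1)^k) * (V:ℚ)^(b-k) := by
    intro v _
    rw [sub_eq_add_neg, add_comm ((V:ℚ)), add_pow]
    rw [Finset.mul_sum]
    apply Finset.sum_congr rfl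
    intro k hk
    rw [neg_pow, pow_add]
    ring
  rw [Finset.sum_congr rfl h, Finset.sum_comm, Tpoly, eval_finset_sum]
  apply Finset.sum_congr rfl
  intro k _
  rw [eval_mul, eval_mul, eval_C, eval_pow, eval_X, Spoly_eval, Finset.mul_sum]
  apply Finset.sum_congr rfl
  intro v _
  ring

lemma coeff_Hs (a n N : ℕ) :
    PowerSeries.coeff N (Hs a n) = if n ∣ N ∧ 0 < N then ((N / n : ℕ) : ℚ) ^ a else 0 := by
  simp [Hs]

lemma Hs_mul_Hs (a b n : ℕ) (hn : 0 < n) (ha : 1 ≤ a) :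
    Hs a n * Hs b n
      = ∑ c ∈ Finset.range ((Tpoly a b).natDegree + 1), ((Tpoly a b).coeff c) • Hs c n := by
  ext N
  rw [PowerSeries.coeff_mul, map_sum]
  simp only [LinearMap.map_smul, coeff_Hs, smul_eq_mul]
  by_cases hN : n ∣ N ∧ 0 < N
  · obtain ⟨⟨V, hV⟩, hNpos⟩ := hN
    have hVn : N / n = V := by rw [hV]; exact Nat.mul_div_cancel_left V hn
    have hcond : n ∣ N ∧ 0 < N := ⟨⟨V, hV⟩, hNpos⟩
    have hRHS : (∑ c ∈ Finset.range ((Tpoly a b).natDegree + 1),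
        (Tpoly a b).coeff c * if n ∣ N ∧ 0 < N then ((N / n : ℕ) : ℚ) ^ c else 0)
        = (Tpoly a b).eval (V:ℚ) := by
      rw [eval_eq_sum_range]
      apply Finset.sum_congr rfl
      intro c _
      rw [if_pos hcond, hVn]
    rw [hRHS, Tpoly_eval]
    -- LHS bijection
    apply Finset.sum_bij_ne_zero (i := fun p _ _ => p.1 / n)
    · rintro ⟨N1, N2⟩ hp hne
      simp only [Finset.HasAntidiagonal.mem_antidiagonal] at hp
      have h1 : n ∣ N1 ∧ 0 < N1 := by
        by_contra h; rw [if_neg h, zero_mul] at hne; exact hne rfl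
      have h2 : n ∣ N2 ∧ 0 < N2 := by
        by_contra h; rw [if_neg h, mul_zero] at hne; exact hne rfl
      obtain ⟨⟨v, hv⟩, h1p⟩ := h1
      obtain ⟨⟨w, hw⟩, h2p⟩ := h2
      simp only [Finset.mem_range]
      have hdv : N1 / n = v := by rw [hv]; exact Nat.mul_div_cancel_left v hn
      rw [hdv]
      have hsum : n * (v + w) = n * V := by rw [Nat.mul_add, ← hv, ← hw, hp, hV]
      have hvw : v + w = V := Nat.eq_of_mul_eq_mul_left hn hsum
      have hw0 : 0 < w := by
        rcases Nat.eq_zero_or_pos w with h | h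
        · subst h; simp at hw; omega
        · exact h
      omega
    · rintro ⟨N1, N2⟩ h11 h12 ⟨N1', N2'⟩ h21 h22 heq
      simp only [Finset.HasAntidiagonal.mem_antidiagonal] at h11 h21
      have h1 : n ∣ N1 ∧ 0 < N1 := by
        by_contra h; rw [if_neg h, zero_mul] at h12; exact h12 rfl
      have h1' : n ∣ N1' ∧ 0 < N1' := by
        by_contra h; rw [if_neg h, zero_mul] at h22; exact h22 rfl
      have e1 : N1 = N1' := by
        obtain ⟨v, hv⟩ := h1.1; obtain ⟨v', hv'⟩ := h1'.1
        rw [hv, hv'] at heq ⊢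
        rw [Nat.mul_div_cancel_left v hn, Nat.mul_div_cancel_left v' hn] at heq
        rw [heq]
      have e2 : N2 = N2' := by omega
      simp [e1, e2]
    · rintro v hv hgv
      have hv0 : 0 < v := by
        rcases Nat.eq_zero_or_pos v with h | h
        · exfalso; apply hgv; subst h; simp [zero_pow (by omega : a ≠ 0)]
        · exact h
      simp only [Finset.mem_range] at hv
      refine ⟨(n*v, n*(V-v)), ?_, ?_, ?_⟩
      · simp only [Finset.HasAntidiagonal.mem_antidiagonal]
        rw [← Nat.mul_add, hV]; congr 1; omega
      · have c1 : n ∣ n*v ∧ 0 < n*v := ⟨Dvd.intro v rfl, Nat.mul_pos hn hv0⟩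
        have c2 : n ∣ n*(V-v) ∧ 0 < n*(V-v) := ⟨Dvd.intro _ rfl, Nat.mul_pos hn (by omega)⟩
        rw [if_pos c1, if_pos c2, Nat.mul_div_cancel_left _ hn, Nat.mul_div_cancel_left _ hn]
        intro hcontra
        apply hgv
        rw [← hcontra]
        congr 1
        · push_cast [Nat.cast_sub (le_of_lt hv)]; ring
      · exact Nat.mul_div_cancel_left v hn
    · rintro ⟨N1, N2⟩ hp hne
      simp only [Finset.HasAntidiagonal.mem_antidiagonal] at hp
      have h1 : n ∣ N1 ∧ 0 < N1 := by
        by_contra h; rw [if_neg h, zero_mul] at hne; exact hne rfl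
      have h2 : n ∣ N2 ∧ 0 < N2 := by
        by_contra h; rw [if_neg h, mul_zero] at hne; exact hne rfl
      rw [if_pos h1, if_pos h2]
      obtain ⟨⟨v, hv⟩, h1p⟩ := h1
      obtain ⟨⟨w, hw⟩, h2p⟩ := h2
      have hvn : N1 / n = v := by rw [hv]; exact Nat.mul_div_cancel_left v hn
      have hwn : N2 / n = w := by rw [hw]; exact Nat.mul_div_cancel_left w hn
      have hvw : v + w = V := by
        have h : n * (v + w) = n * V := by rw [Nat.mul_add, ← hv, ← hw, hp, hV]
        exact Nat.eq_of_mul_eq_mul_left hn h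
      rw [hvn, hwn]
      congr 1
      have : (w:ℚ) = (V:ℚ) - (v:ℚ) := by
        have : ((v+w:ℕ):ℚ) = (V:ℚ) := by rw [hvw]
        push_cast at this; linarith
      rw [this]
  · -- N not a positive multiple of n : both sides are 0
    have hR : ∀ c ∈ Finset.range ((Tpoly a b).natDegree + 1),
        (Tpoly a b).coeff c * (if n ∣ N ∧ 0 < N then ((N / n : ℕ) : ℚ) ^ c else 0) = 0 := by
      intro c _; rw [if_neg hN, mul_zero]
    rw [Finset.sum_eq_zero hR]
    apply Finset.sum_eq_zero
    rintro ⟨N1, N2⟩ hp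
    simp only [Finset.HasAntidiagonal.mem_antidiagonal] at hp
    by_cases h1 : n ∣ N1 ∧ 0 < N1
    · by_cases h2 : n ∣ N2 ∧ 0 < N2
      · exact absurd ⟨hp ▸ Nat.dvd_add h1.1 h2.1, hp ▸ Nat.add_pos_left h1.2 N2⟩ hN
      · rw [if_neg h2, mul_zero]
    · rw [if_neg h1, zero_mul]

noncomputable def BrSet (l M N : ℕ) : Finset ((Fin l → ℕ) × (Fin l → ℕ)) :=
  ((Finset.Iic fun _ => M) ×ˢ (Finset.Iic fun _ => N)).filter
    (fun uv => StrictAnti uv.1 ∧ (∀ j, 0 < uv.1 j) ∧ (∀ j, 0 < uv.2 j) ∧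
      ∑ j, uv.1 j * uv.2 j = N)

lemma strictAnti_cons_iff {l : ℕ} (a : ℕ) (u : Fin l → ℕ) :
    StrictAnti (Fin.cons a u : Fin (l+1) → ℕ) ↔ (∀ j, u j < a) ∧ StrictAnti u := by
  constructor
  · intro h
    constructor
    · intro j
      have := h (Fin.succ_pos j)
      simpa using this
    · intro i j hij
      have := h (Fin.succ_lt_succ_iff.mpr hij)
      simpa using this
  · rintro ⟨h1, h2⟩ i j hij
    refine Fin.cases ?_ ?_ j hij
    · intro h; exact absurd h (Fin.not_lt.mpr (Fin.zero_le i))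
    · intro j' hj'
      refine Fin.cases ?_ ?_ i hj'
      · intro _; simpa using h1 j'
      · intro i' hi'; simpa using h2 (Fin.succ_lt_succ_iff.mp hi')

lemma coeff_Bt : ∀ (l : ℕ) (e : Fin l → ℕ) (M N : ℕ),
    PowerSeries.coeff N (Bt l e M) = ∑ uv ∈ BrSet l M N, ∏ j, (uv.2 j : ℚ) ^ (e j)
  | 0, e, M, N => by
    rw [show Bt 0 e M = 1 from rfl]
    have huniq : ∀ uv : (Fin 0 → ℕ) × (Fin 0 → ℕ), uv = (Fin.elim0, Fin.elim0) := by
      rintro ⟨u, v⟩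
      ext j <;> exact Fin.elim0 j
    by_cases hN : N = 0
    · subst hN
      have hmem : ((Fin.elim0, Fin.elim0) : (Fin 0 → ℕ) × (Fin 0 → ℕ)) ∈ BrSet 0 M 0 := by
        rw [BrSet, Finset.mem_filter, Finset.mem_product]
        refine ⟨⟨Finset.mem_Iic.mpr ?_, Finset.mem_Iic.mpr ?_⟩, ?_, ?_, ?_, ?_⟩
        · intro j; exact Fin.elim0 j
        · intro j; exact Fin.elim0 j
        · intro i j hij; exact Fin.elim0 i
        · intro j; exact Fin.elim0 j
        · intro j; exact Fin.elim0 j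
        · simp
      have hset : BrSet 0 M 0 = {(Fin.elim0, Fin.elim0)} := by
        apply Finset.eq_singleton_iff_unique_mem.mpr
        exact ⟨hmem, fun x _ => huniq x⟩
      rw [hset]
      simp
    · have hset : BrSet 0 M N = ∅ := by
        apply Finset.eq_empty_iff_forall_notMem.mpr
        intro uv huv
        rw [BrSet, Finset.mem_filter] at huv
        exact hN (huv.2.2.2.2.symm ▸ (by simp))
      rw [hset]
      simp [PowerSeries.coeff_one, hN]
  | (l+1), e, M, N => by
    have IH := coeff_Bt l
    rw [show Bt (l+1) e M = ∑ n ∈ Finset.Icc 1 M, Hs (e 0) n * Bt l (fun j => e j.succ) (n-1)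
        from rfl, map_sum]
    have step1 : ∀ n ∈ Finset.Icc 1 M,
        PowerSeries.coeff N (Hs (e 0) n * Bt l (fun j => e j.succ) (n-1))
        = ∑ p ∈ Finset.HasAntidiagonal.antidiagonal N, ∑ uv' ∈ BrSet l (n-1) p.2,
            (if n ∣ p.1 ∧ 0 < p.1 then ((p.1 / n : ℕ) : ℚ) ^ (e 0) else 0) *
              ∏ j, (uv'.2 j : ℚ) ^ (e j.succ) := by
      intro n _
      rw [PowerSeries.coeff_mul]
      apply Finset.sum_congr rfl
      intro p _
      rw [coeff_Hs, IH, Finset.mul_sum]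
    rw [Finset.sum_congr rfl step1]
    have step2 : (∑ n ∈ Finset.Icc 1 M, ∑ p ∈ Finset.HasAntidiagonal.antidiagonal N,
        ∑ uv' ∈ BrSet l (n-1) p.2,
          (if n ∣ p.1 ∧ 0 < p.1 then ((p.1 / n : ℕ) : ℚ) ^ (e 0) else 0) *
            ∏ j, (uv'.2 j : ℚ) ^ (e j.succ))
        = ∑ x ∈ (Finset.Icc 1 M).sigma
            (fun n => (Finset.HasAntidiagonal.antidiagonal N).sigma (fun p => BrSet l (n-1) p.2)),
          (if x.1 ∣ x.2.1.1 ∧ 0 < x.2.1.1 then ((x.2.1.1 / x.1 : ℕ) : ℚ) ^ (e 0) else 0) *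
            ∏ j, (x.2.2.2 j : ℚ) ^ (e j.succ) := by
      rw [Finset.sum_sigma]
      apply Finset.sum_congr rfl
      intro n _
      rw [Finset.sum_sigma]
    rw [step2]
    -- now the bijection
    apply Finset.sum_bij_ne_zero
      (i := fun x _ _ => ((Fin.cons x.1 x.2.2.1 : Fin (l+1) → ℕ),
                          (Fin.cons (x.2.1.1 / x.1) x.2.2.2 : Fin (l+1) → ℕ)))
    · -- maps into BrSet (l+1) M N
      rintro ⟨n, ⟨N1, N2⟩, u', v'⟩ hmem hne
      simp only [Finset.mem_sigma, Finset.mem_Icc, Finset.HasAntidiagonal.mem_antidiagonal] at hmem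
      obtain ⟨⟨hn1, hnM⟩, hp, huv'⟩ := hmem
      rw [BrSet, Finset.mem_filter, Finset.mem_product, Finset.mem_Iic, Finset.mem_Iic] at huv'
      obtain ⟨⟨huI, hvI⟩, hSA, hupos, hvpos, hsum⟩ := huv'
      dsimp only at huI hvI hSA hupos hvpos hsum
      have hcondif : n ∣ N1 ∧ 0 < N1 := by
        by_contra hc
        simp only [if_neg hc, zero_mul] at hne
        exact hne rfl
      obtain ⟨hdvd, hN1pos⟩ := hcondif
      rw [BrSet, Finset.mem_filter, Finset.mem_product, Finset.mem_Iic, Finset.mem_Iic]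
      dsimp only
      have hbound : ∀ j, u' j ≤ n - 1 := fun j => huI j
      have hvbound : ∀ j, v' j ≤ N2 := fun j => hvI j
      refine ⟨⟨?_, ?_⟩, ?_, ?_, ?_, ?_⟩
      · intro j
        refine Fin.cases ?_ ?_ j
        · simpa using hnM
        · intro i; simp only [Fin.cons_succ]; have := hbound i; omega
      · intro j
        refine Fin.cases ?_ ?_ j
        · simp only [Fin.cons_zero]
          have h1 : N1 / n ≤ N1 := Nat.div_le_self _ _
          omega
        · intro i; simp only [Fin.cons_succ]
          have := hvbound i
          omega
      · rw [strictAnti_cons_iff]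
        exact ⟨fun j => by have := hbound j; omega, hSA⟩
      · intro j
        refine Fin.cases ?_ ?_ j
        · simpa using Nat.pos_of_ne_zero (by omega : n ≠ 0)
        · intro i; simpa using hupos i
      · intro j
        refine Fin.cases ?_ ?_ j
        · simp only [Fin.cons_zero]
          exact Nat.div_pos (Nat.le_of_dvd hN1pos hdvd) (by omega)
        · intro i; simpa using hvpos i
      · rw [Fin.sum_univ_succ]
        simp only [Fin.cons_zero, Fin.cons_succ]
        rw [Nat.mul_div_cancel' hdvd]
        rw [show (∑ i : Fin l, u' i * v' i) = N2 from hsum]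
        exact hp
    · -- injectivity
      rintro ⟨n1, ⟨P1, P2⟩, u1, v1⟩ h11 h12 ⟨n2, ⟨Q1, Q2⟩, u2, v2⟩ h21 h22 heq
      simp only [Prod.mk.injEq] at heq
      obtain ⟨hequ, heqv⟩ := heq
      have hn : n1 = n2 := by
        have := congrFun hequ 0; simpa using this
      have hu : u1 = u2 := by
        funext j; have := congrFun hequ j.succ; simpa using this
      have hv0 : P1 / n1 = Q1 / n2 := by
        have := congrFun heqv 0; simpa using this
      have hv : v1 = v2 := by
        funext j; have := congrFun heqv j.succ; simpa using this
      have hd1 : n1 ∣ P1 ∧ 0 < P1 := by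
        by_contra hc; simp only [if_neg hc, zero_mul] at h12; exact h12 rfl
      have hd2 : n2 ∣ Q1 ∧ 0 < Q1 := by
        by_contra hc; simp only [if_neg hc, zero_mul] at h22; exact h22 rfl
      have hP1 : P1 = Q1 := by
        have e1 : P1 = n1 * (P1 / n1) := (Nat.mul_div_cancel' hd1.1).symm
        have e2 : Q1 = n2 * (Q1 / n2) := (Nat.mul_div_cancel' hd2.1).symm
        conv_lhs => rw [e1]
        rw [hv0, hn]
        exact e2.symm
      simp only [Finset.mem_sigma, Finset.HasAntidiagonal.mem_antidiagonal] at h11 h21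
      have hP2 : P2 = Q2 := by
        have := h11.2.1; have := h21.2.1; omega
      subst hn hu hv hP1 hP2
      rfl
    · -- surjectivity
      rintro ⟨u, v⟩ hmem hgne
      rw [BrSet, Finset.mem_filter, Finset.mem_product, Finset.mem_Iic, Finset.mem_Iic] at hmem
      obtain ⟨⟨huI, hvI⟩, hSA, hupos, hvpos, hsum⟩ := hmem
      dsimp only at huI hvI hSA hupos hvpos hsum
      dsimp only at hgne
      have hu0 : 0 < u 0 := hupos 0
      have hv0 : 0 < v 0 := hvpos 0
      have htail : ∑ j : Fin l, u j.succ * v j.succ = N - u 0 * v 0 := by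
        rw [Fin.sum_univ_succ] at hsum; omega
      have huv0 : u 0 * v 0 ≤ N := by
        rw [Fin.sum_univ_succ] at hsum; omega
      refine ⟨⟨u 0, ⟨(u 0 * v 0, N - u 0 * v 0), (Fin.tail u, Fin.tail v)⟩⟩, ?_, ?_, ?_⟩
      · simp only [Finset.mem_sigma, Finset.mem_Icc, Finset.HasAntidiagonal.mem_antidiagonal]
        refine ⟨⟨hu0, huI 0⟩, by omega, ?_⟩
        rw [BrSet, Finset.mem_filter, Finset.mem_product, Finset.mem_Iic, Finset.mem_Iic]
        refine ⟨⟨?_, ?_⟩, ?_, ?_, ?_, htail⟩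
        · intro j
          have := hSA (Fin.succ_pos j)
          simp only [Fin.tail]; omega
        · intro j
          simp only [Fin.tail]
          have hterm : u j.succ * v j.succ ≤ N - u 0 * v 0 := by
            rw [← htail]
            exact Finset.single_le_sum (f := fun i : Fin l => u i.succ * v i.succ)
              (fun i _ => Nat.zero_le _) (Finset.mem_univ j)
          have := hupos j.succ
          calc v j.succ ≤ u j.succ * v j.succ := Nat.le_mul_of_pos_left _ (hupos j.succ)
            _ ≤ N - u 0 * v 0 := hterm
        · intro i j hij
          exact hSA (Fin.succ_lt_succ_iff.mpr hij)
        · intro j; exact hupos j.succ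
        · intro j; exact hvpos j.succ
      · have hcond : u 0 ∣ u 0 * v 0 ∧ 0 < u 0 * v 0 :=
          ⟨Dvd.intro _ rfl, Nat.mul_pos hu0 hv0⟩
        rw [if_pos hcond]
        intro hc
        apply hgne
        rw [← hc]
        rw [Fin.prod_univ_succ]
        congr 1
        · rw [Nat.mul_div_cancel_left _ hu0]
      · rw [Nat.mul_div_cancel_left _ hu0, Fin.cons_self_tail, Fin.cons_self_tail]
    · -- value equality
      rintro ⟨n, ⟨N1, N2⟩, u', v'⟩ hmem hne
      have hcondif : n ∣ N1 ∧ 0 < N1 := by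
        by_contra hc
        simp only [if_neg hc, zero_mul] at hne
        exact hne rfl
      rw [if_pos hcondif, Fin.prod_univ_succ]
      simp only [Fin.cons_zero, Fin.cons_succ]

lemma BrSet_stable (l M N : ℕ) (h : N ≤ M) : BrSet l M N = BrSet l N N := by
  ext ⟨u, v⟩
  simp only [BrSet, Finset.mem_filter, Finset.mem_product, Finset.mem_Iic, Pi.le_def]
  constructor
  · rintro ⟨⟨h1, h2⟩, hSA, hup, hvp, hsum⟩
    refine ⟨⟨?_, h2⟩, hSA, hup, hvp, hsum⟩
    intro j
    have hterm : u j * v j ≤ N := hsum ▸ Finset.single_le_sum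
      (f := fun i => u i * v i) (fun i _ => Nat.zero_le _) (Finset.mem_univ j)
    have h3 : u j ≤ u j * v j := Nat.le_mul_of_pos_right _ (hvp j)
    omega
  · rintro ⟨⟨h1, h2⟩, hc⟩
    exact ⟨⟨fun j => le_trans (h1 j) h, h2⟩, hc⟩

def genSet : Set (ℕ → PowerSeries ℚ) :=
  {F | ∃ (n : ℕ) (g : Fin n → ℕ), (∀ j, 1 ≤ g j) ∧ F = fun M => Bt n g M}

noncomputable def Lam (a : ℕ) : (ℕ → PowerSeries ℚ) →ₗ[ℚ] (ℕ → PowerSeries ℚ) where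
  toFun F := fun M => ∑ n ∈ Finset.Icc 1 M, Hs a n * F (n-1)
  map_add' F G := by
    funext M
    simp [mul_add, Finset.sum_add_distrib]
  map_smul' c F := by
    funext M
    simp [Finset.smul_sum, Algebra.mul_smul_comm]

lemma Lam_apply (a : ℕ) (F : ℕ → PowerSeries ℚ) (M : ℕ) :
    Lam a F M = ∑ n ∈ Finset.Icc 1 M, Hs a n * F (n-1) := rfl

lemma Lam_Bt (a : ℕ) (n : ℕ) (g : Fin n → ℕ) :
    Lam a (fun M => Bt n g M) = fun M => Bt (n+1) (Fin.cons a g) M := by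
  funext M
  rw [Lam_apply]
  rw [show Bt (n+1) (Fin.cons a g) M
      = ∑ k ∈ Finset.Icc 1 M, Hs ((Fin.cons a g : Fin (n+1) → ℕ) 0) k *
          Bt n (fun j => (Fin.cons a g : Fin (n+1) → ℕ) j.succ) (k-1) from rfl]
  simp only [Fin.cons_zero, Fin.cons_succ]

lemma Lam_mem_span (a : ℕ) (ha : 1 ≤ a) {F : ℕ → PowerSeries ℚ}
    (hF : F ∈ Submodule.span ℚ genSet) : Lam a F ∈ Submodule.span ℚ genSet := by
  induction hF using Submodule.span_induction with
  | mem x hx =>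
    obtain ⟨n, g, hg, rfl⟩ := hx
    rw [Lam_Bt]
    exact Submodule.subset_span ⟨n+1, Fin.cons a g,
      fun j => Fin.cases ha hg j, rfl⟩
  | zero => simp
  | add x y _ _ hx hy => rw [map_add]; exact Submodule.add_mem _ hx hy
  | smul c x _ hx => rw [map_smul]; exact Submodule.smul_mem _ _ hx

lemma triSplit (X Y : ℕ → PowerSeries ℚ) (M : ℕ) :
    (∑ n ∈ Finset.Icc 1 M, X n) * (∑ n ∈ Finset.Icc 1 M, Y n) =
      (∑ n ∈ Finset.Icc 1 M, X n * (∑ k ∈ Finset.Icc 1 (n-1), Y k))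
    + (∑ n ∈ Finset.Icc 1 M, (∑ k ∈ Finset.Icc 1 (n-1), X k) * Y n)
    + ∑ n ∈ Finset.Icc 1 M, X n * Y n := by
  have hIcc : ∀ k : ℕ, Finset.Icc 1 k = Finset.Ioc 0 k := fun k => by
    rw [← Finset.Icc_add_one_left_eq_Ioc, zero_add]
  simp only [hIcc]
  rw [Finset.sum_mul_sum]
  have hsplit : ∀ n ∈ Finset.Ioc 0 M,
      (∑ k ∈ Finset.Ioc 0 M, X n * Y k)
      = X n * (∑ k ∈ Finset.Ioc 0 (n-1), Y k) + X n * Y n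
        + ∑ k ∈ Finset.Ioc n M, X n * Y k := by
    intro n hn
    simp only [Finset.mem_Ioc] at hn
    have h1 : ∑ k ∈ Finset.Ioc 0 n, (X n * Y k) + ∑ k ∈ Finset.Ioc n M, (X n * Y k)
        = ∑ k ∈ Finset.Ioc 0 M, (X n * Y k) :=
      Finset.sum_Ioc_consecutive _ (Nat.zero_le n) hn.2
    have h2 : ∑ k ∈ Finset.Ioc 0 n, (X n * Y k)
        = ∑ k ∈ Finset.Ioc 0 (n-1), (X n * Y k) + X n * Y n := by
      have : n = (n-1) + 1 := by omega
      rw [this, Finset.sum_Ioc_succ_top (Nat.zero_le _)]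
      rw [← this]
    rw [← h1, h2, Finset.mul_sum]
  rw [Finset.sum_congr rfl hsplit]
  rw [Finset.sum_add_distrib, Finset.sum_add_distrib]
  have hswap : ∑ n ∈ Finset.Ioc 0 M, ∑ k ∈ Finset.Ioc n M, X n * Y k
      = ∑ k ∈ Finset.Ioc 0 M, (∑ n ∈ Finset.Ioc 0 (k-1), X n) * Y k := by
    rw [Finset.sum_comm' (s' := fun k => Finset.Ioc 0 (k-1)) (t' := Finset.Ioc 0 M)]
    · apply Finset.sum_congr rfl
      intro k _
      rw [Finset.sum_mul]
    · intro n k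
      simp only [Finset.mem_Ioc]
      omega
  rw [hswap]
  ring

lemma stuffle : ∀ (k l m : ℕ) (e : Fin l → ℕ) (f : Fin m → ℕ), l + m ≤ k →
    (∀ j, 1 ≤ e j) → (∀ j, 1 ≤ f j) →
    (fun M => Bt l e M * Bt m f M) ∈ Submodule.span ℚ genSet := by
  intro k
  induction k with
  | zero =>
    intro l m e f hk he hf
    have hl : l = 0 := by omega
    have hm : m = 0 := by omega
    subst hl; subst hm
    have : (fun M => Bt 0 e M * Bt 0 f M) = fun M => Bt 0 f M := by
      funext M; rw [show Bt 0 e M = 1 from rfl, one_mul]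
    rw [this]
    exact Submodule.subset_span ⟨0, f, hf, rfl⟩
  | succ k ih =>
    intro l m e f hk he hf
    match l, m, e, f with
    | 0, m, e, f =>
      have : (fun M => Bt 0 e M * Bt m f M) = fun M => Bt m f M := by
        funext M; rw [show Bt 0 e M = 1 from rfl, one_mul]
      rw [this]
      exact Submodule.subset_span ⟨m, f, hf, rfl⟩
    | (l+1), 0, e, f =>
      have : (fun M => Bt (l+1) e M * Bt 0 f M) = fun M => Bt (l+1) e M := by
        funext M; rw [show Bt 0 f M = 1 from rfl, mul_one]
      rw [this]
      exact Submodule.subset_span ⟨l+1, e, he, rfl⟩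
    | (l+1), (m+1), e, f =>
      set a := e 0 with ha_def
      set b := f 0 with hb_def
      set e' : Fin l → ℕ := fun j => e j.succ with he'_def
      set f' : Fin m → ℕ := fun j => f j.succ with hf'_def
      have key : (fun M => Bt (l+1) e M * Bt (m+1) f M)
          = Lam a (fun K => Bt l e' K * Bt (m+1) f K)
          + Lam b (fun K => Bt (l+1) e K * Bt m f' K)
          + ∑ c ∈ Finset.range ((Tpoly a b).natDegree + 1), (Tpoly a b).coeff c •
              Lam c (fun K => Bt l e' K * Bt m f' K) := by
        funext M
        simp only [Pi.add_apply, Finset.sum_apply, Pi.smul_apply]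
        rw [show Bt (l+1) e M
            = ∑ n ∈ Finset.Icc 1 M, Hs a n * Bt l e' (n-1) from rfl]
        rw [show Bt (m+1) f M
            = ∑ n ∈ Finset.Icc 1 M, Hs b n * Bt m f' (n-1) from rfl]
        rw [triSplit]
        congr 1
        · congr 1
          · rw [Lam_apply]
            apply Finset.sum_congr rfl
            intro n _
            rw [show Bt (m+1) f (n-1)
                = ∑ k ∈ Finset.Icc 1 (n-1), Hs b k * Bt m f' (k-1) from rfl]
            rw [mul_assoc]
          · rw [Lam_apply]
            apply Finset.sum_congr rfl
            intro n _
            rw [show Bt (l+1) e (n-1)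
                = ∑ k ∈ Finset.Icc 1 (n-1), Hs a k * Bt l e' (k-1) from rfl]
            ring
        · -- diagonal term
          have hdiag : ∀ n ∈ Finset.Icc 1 M,
              (Hs a n * Bt l e' (n-1)) * (Hs b n * Bt m f' (n-1))
              = ∑ c ∈ Finset.range ((Tpoly a b).natDegree + 1), (Tpoly a b).coeff c •
                  (Hs c n * (Bt l e' (n-1) * Bt m f' (n-1))) := by
            intro n hn
            simp only [Finset.mem_Icc] at hn
            have h1 : (Hs a n * Bt l e' (n-1)) * (Hs b n * Bt m f' (n-1))
                = (Hs a n * Hs b n) * (Bt l e' (n-1) * Bt m f' (n-1)) := by ring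
            rw [h1, Hs_mul_Hs a b n (by omega) (he 0), Finset.sum_mul]
            apply Finset.sum_congr rfl
            intro c _
            rw [smul_mul_assoc]
          rw [Finset.sum_congr rfl hdiag, Finset.sum_comm]
          apply Finset.sum_congr rfl
          intro c _
          rw [Lam_apply, Finset.smul_sum]
      rw [key]
      apply Submodule.add_mem
      apply Submodule.add_mem
      · exact Lam_mem_span a (he 0) (ih l (m+1) e' f (by omega)
          (fun j => he j.succ) hf)
      · exact Lam_mem_span b (hf 0) (ih (l+1) m e f' (by omega) he
          (fun j => hf j.succ))
      · apply Submodule.sum_mem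
        intro c _
        rcases Nat.eq_zero_or_pos c with hc | hc
        · subst hc
          rw [Tpoly_coeff_zero, zero_smul]
          exact Submodule.zero_mem _
        · exact Submodule.smul_mem _ _ (Lam_mem_span c hc (ih l m e' f' (by omega)
            (fun j => he j.succ) (fun j => hf j.succ)))

noncomputable def Psi : PowerSeries ℚ →ₗ[ℚ] (ℕ → ℚ) where
  toFun f := fun N => PowerSeries.coeff N f
  map_add' f g := by funext N; simp
  map_smul' c f := by funext N; simp

lemma Psi_inj : Function.Injective Psi := by
  intro f g h
  exact PowerSeries.ext fun N => congrFun h N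

noncomputable def evmap : (ℕ → PowerSeries ℚ) →ₗ[ℚ] (ℕ → ℚ) where
  toFun F := fun N => PowerSeries.coeff N (F N)
  map_add' f g := by funext N; simp
  map_smul' c f := by funext N; simp

lemma coeff_bracket (l : ℕ) (s : Fin l → ℕ) (N : ℕ) :
    PowerSeries.coeff N (bracket l s)
      = (∏ j, ((s j - 1).factorial : ℚ))⁻¹ *
          ∑ uv ∈ BrSet l N N, ∏ j, (uv.2 j : ℚ) ^ (s j - 1) := by
  rw [bracket, PowerSeries.coeff_mk, BrSet]

lemma coeff_Bt_bracket (l : ℕ) (s : Fin l → ℕ) (M N : ℕ) (h : N ≤ M) :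
    PowerSeries.coeff N (Bt l (fun j => s j - 1) M)
      = (∏ j, ((s j - 1).factorial : ℚ)) * PowerSeries.coeff N (bracket l s) := by
  rw [coeff_Bt, BrSet_stable l M N h, coeff_bracket, ← mul_assoc, mul_inv_cancel₀, one_mul]
  apply Finset.prod_ne_zero_iff.mpr
  intro j _
  exact_mod_cast Nat.factorial_ne_zero _

/-- `MD^♯` is closed under multiplication: the product of two brackets
with all entries ≥ 2 lies in the ℚ-span of such brackets. -/
theorem MDsharp_mul_mem (l m : ℕ) (s : Fin l → ℕ) (r : Fin m → ℕ)
    (hs : ∀ j, 2 ≤ s j) (hr : ∀ j, 2 ≤ r j) :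
    bracket l s * bracket m r ∈ MDsharp := by
  set e : Fin l → ℕ := fun j => s j - 1 with he_def
  set f : Fin m → ℕ := fun j => r j - 1 with hf_def
  set c1 : ℚ := ∏ j, ((s j - 1).factorial : ℚ) with hc1
  set c2 : ℚ := ∏ j, ((r j - 1).factorial : ℚ) with hc2
  have hc1ne : c1 ≠ 0 := Finset.prod_ne_zero_iff.mpr
    (fun j _ => by exact_mod_cast Nat.factorial_ne_zero _)
  have hc2ne : c2 ≠ 0 := Finset.prod_ne_zero_iff.mpr
    (fun j _ => by exact_mod_cast Nat.factorial_ne_zero _)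
  have hspan := stuffle (l+m) l m e f le_rfl
    (fun j => by have := hs j; simp only [he_def]; omega)
    (fun j => by have := hr j; simp only [hf_def]; omega)
  -- evmap of the product family equals (c1*c2) • Psi (bracket l s * bracket m r)
  have hev : evmap (fun M => Bt l e M * Bt m f M)
      = (c1 * c2) • Psi (bracket l s * bracket m r) := by
    funext N
    show PowerSeries.coeff N (Bt l e N * Bt m f N)
      = (c1 * c2) * PowerSeries.coeff N (bracket l s * bracket m r)
    rw [PowerSeries.coeff_mul, PowerSeries.coeff_mul, Finset.mul_sum]
    apply Finset.sum_congr rfl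
    rintro ⟨N1, N2⟩ hp
    simp only [Finset.HasAntidiagonal.mem_antidiagonal] at hp
    rw [coeff_Bt_bracket l s N (N1) (by omega), coeff_Bt_bracket m r N (N2) (by omega)]
    ring
  -- span of evmap-image of genSet lands in (MDsharp.map Psi)
  have himg : evmap '' genSet ⊆ ↑(MDsharp.map Psi) := by
    rintro x ⟨F, ⟨n, g, hg, rfl⟩, rfl⟩
    have hcg : (∏ j, ((g j).factorial : ℚ)) ≠ 0 := Finset.prod_ne_zero_iff.mpr
      (fun j _ => by exact_mod_cast Nat.factorial_ne_zero _)
    refine ⟨(∏ j, ((g j).factorial : ℚ)) • bracket n (fun j => g j + 1), ?_, ?_⟩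
    · exact Submodule.smul_mem _ _ (Submodule.subset_span
        ⟨n, fun j => g j + 1, fun j => by have := hg j; show 2 ≤ g j + 1; omega, rfl⟩)
    · funext N
      show (∏ j, ((g j).factorial : ℚ)) * PowerSeries.coeff N (bracket n (fun j => g j + 1))
        = PowerSeries.coeff N (Bt n g N)
      have : PowerSeries.coeff N (Bt n (fun j => (fun j => g j + 1) j - 1) N)
          = (∏ j, (((fun j => g j + 1) j - 1).factorial : ℚ)) *
              PowerSeries.coeff N (bracket n (fun j => g j + 1)) :=
        coeff_Bt_bracket n (fun j => g j + 1) N N le_rfl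
      simp only [Nat.add_sub_cancel] at this
      rw [← this]
  have hmem : evmap (fun M => Bt l e M * Bt m f M) ∈ MDsharp.map Psi := by
    have h1 : evmap (fun M => Bt l e M * Bt m f M)
        ∈ Submodule.map evmap (Submodule.span ℚ genSet) :=
      Submodule.mem_map_of_mem hspan
    rw [Submodule.map_span] at h1
    exact Submodule.span_le.mpr himg h1
  rw [hev] at hmem
  have hfinal : Psi (bracket l s * bracket m r) ∈ MDsharp.map Psi := by
    have := Submodule.smul_mem (MDsharp.map Psi) (c1 * c2)⁻¹ hmem
    rwa [smul_smul, inv_mul_cancel₀ (by positivity), one_smul] at this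
  obtain ⟨y, hy, hΨ⟩ := hfinal
  rwa [Psi_inj hΨ] at hy
end

section
/- The ℚ-vector space qMZV spanned by the Okounkov q-multiple zeta values equals MD^♯: every Z(s_1,…,s_l) with all s_i ≥ 2 is a ℚ-linear combination of brackets [t_1,…,t_n] with all t_i ≥ 2, and conversely every such bracket is a ℚ-linear combination of the Z(s_1,…,s_l). In particular the ℚ-vector space generated by the Z(s_1,…,s_l) is closed under multiplication. -/
open Polynomial

open scoped Classical

namespace QMZV
open PowerSeries


/-- Expansion `X ↦ X^n` on power series, coefficientwise. -/
noncomputable def expand (n : ℕ) (f : PowerSeries ℚ) : PowerSeries ℚ :=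
  PowerSeries.mk fun m => if n ∣ m then PowerSeries.coeff (m / n) f else 0

@[simp] lemma coeff_expand (n : ℕ) (f : PowerSeries ℚ) (m : ℕ) :
    PowerSeries.coeff m (expand n f) =
      if n ∣ m then PowerSeries.coeff (m / n) f else 0 := by
  simp [expand]

lemma expand_one_fun (n : ℕ) (hn : 0 < n) : expand n 1 = 1 := by
  ext m
  simp only [QMZV.coeff_expand, PowerSeries.coeff_one]
  rcases eq_or_ne m 0 with rfl | hm
  · simp [Nat.div_self hn, hn]
  · rcases em (n ∣ m) with h | h
    · have : m / n ≠ 0 := by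
        rcases h with ⟨c, rfl⟩
        have : c ≠ 0 := by rintro rfl; simp at hm
        simp [Nat.mul_div_cancel_left _ hn, this]
      simp [h, this, hm]
    · simp [h, hm]

lemma expand_add (n : ℕ) (f g : PowerSeries ℚ) :
    expand n (f + g) = expand n f + expand n g := by
  ext m
  simp only [QMZV.coeff_expand, map_add]
  split <;> simp

lemma expand_mul (n : ℕ) (hn : 0 < n) (f g : PowerSeries ℚ) :
    expand n (f * g) = expand n f * expand n g := by
  ext m
  rw [PowerSeries.coeff_mul]
  simp only [QMZV.coeff_expand]
  have key : ∀ p ∈ Finset.HasAntidiagonal.antidiagonal m,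
      (if n ∣ p.1 then PowerSeries.coeff (p.1 / n) f else 0) *
        (if n ∣ p.2 then PowerSeries.coeff (p.2 / n) g else 0) =
      if n ∣ p.1 ∧ n ∣ p.2 then
        PowerSeries.coeff (p.1 / n) f * PowerSeries.coeff (p.2 / n) g else 0 := by
    intro p _
    rcases em (n ∣ p.1) with h1 | h1 <;> rcases em (n ∣ p.2) with h2 | h2 <;>
      simp [h1, h2]
  rw [Finset.sum_congr rfl key, ← Finset.sum_filter]
  rcases em (n ∣ m) with h | h
  · rw [if_pos h, PowerSeries.coeff_mul]
    obtain ⟨M, rfl⟩ := h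
    rw [Nat.mul_div_cancel_left _ hn]
    refine (Finset.sum_nbij' (i := fun p => (p.1 / n, p.2 / n))
      (j := fun q => (n * q.1, n * q.2)) ?_ ?_ ?_ ?_ ?_).symm
    · rintro ⟨p1, p2⟩ hp
      simp only [Finset.mem_filter, Finset.HasAntidiagonal.mem_antidiagonal] at hp
      obtain ⟨hsum, ⟨c, hc⟩, ⟨d, hd⟩⟩ := hp
      subst hc; subst hd
      simp only [Finset.HasAntidiagonal.mem_antidiagonal, Nat.mul_div_cancel_left _ hn]
      have : n * c + n * d = n * (c + d) := by ring
      rw [this] at hsum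
      exact Nat.eq_of_mul_eq_mul_left hn hsum
    · rintro ⟨q1, q2⟩ hq
      simp only [Finset.HasAntidiagonal.mem_antidiagonal] at hq
      simp only [Finset.mem_filter, Finset.HasAntidiagonal.mem_antidiagonal]
      refine ⟨by rw [← Nat.mul_add, hq], Dvd.intro _ rfl, Dvd.intro _ rfl⟩
    · rintro ⟨p1, p2⟩ hp
      simp only [Finset.mem_filter, Finset.HasAntidiagonal.mem_antidiagonal] at hp
      obtain ⟨hsum, ⟨c, hc⟩, ⟨d, hd⟩⟩ := hp
      subst hc; subst hd
      simp [Nat.mul_div_cancel_left _ hn]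
    · rintro ⟨q1, q2⟩ hq
      simp [Nat.mul_div_cancel_left _ hn]
    · rintro ⟨p1, p2⟩ hp
      rfl
  · rw [if_neg h]
    refine (Finset.sum_eq_zero ?_).symm
    intro p hp
    simp only [Finset.mem_filter, Finset.HasAntidiagonal.mem_antidiagonal] at hp
    exact absurd (hp.1 ▸ Nat.dvd_add hp.2.1 hp.2.2) h

lemma dvd_div_eq_iff (n k m : ℕ) (hn : 0 < n) :
    (n ∣ m ∧ m / n = k) ↔ m = n * k := by
  constructor
  · rintro ⟨⟨c, rfl⟩, h⟩
    rw [Nat.mul_div_cancel_left _ hn] at h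
    rw [h]
  · rintro rfl
    exact ⟨Dvd.intro _ rfl, Nat.mul_div_cancel_left _ hn⟩

lemma expand_coe (n : ℕ) (hn : 0 < n) (p : Polynomial ℚ) :
    expand n (p : PowerSeries ℚ) =
      Polynomial.aeval ((PowerSeries.X : PowerSeries ℚ) ^ n) p := by
  induction p using Polynomial.induction_on' with
  | add f g hf hg =>
      rw [Polynomial.coe_add, expand_add, map_add, hf, hg]
  | monomial k a =>
      rw [Polynomial.aeval_monomial]
      ext m
      rw [Polynomial.coe_monomial]
      simp only [QMZV.coeff_expand, PowerSeries.coeff_monomial, ← pow_mul,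
        PowerSeries.algebraMap_apply, Polynomial.algebraMap_apply, map_mul,
        PowerSeries.coeff_C_mul, PowerSeries.coeff_X_pow]
      rcases em (m = n * k) with he | he
      · have h1 : n ∣ m ∧ m / n = k := (dvd_div_eq_iff n k m hn).2 he
        rw [if_pos h1.1, if_pos h1.2, if_pos he]
        simp
      · rw [if_neg he]
        rcases em (n ∣ m) with h1 | h1
        · rw [if_pos h1, if_neg (fun hc => he ((dvd_div_eq_iff n k m hn).1 ⟨h1, hc⟩))]
          simp
        · rw [if_neg h1]; simp



lemma constantCoeff_one_sub_X_pow (n : ℕ) (hn : 0 < n) :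
    PowerSeries.constantCoeff (1 - (PowerSeries.X : PowerSeries ℚ) ^ n) = 1 := by
  simp [zero_pow hn.ne']

lemma one_sub_X_pow_ne (n : ℕ) (hn : 0 < n) :
    (1 - (PowerSeries.X : PowerSeries ℚ) ^ n) ≠ 0 := by
  intro h
  have := constantCoeff_one_sub_X_pow n hn
  rw [h] at this
  simp at this

lemma constantCoeff_pow_ne (n s : ℕ) (hn : 0 < n) :
    PowerSeries.constantCoeff ((1 - (PowerSeries.X : PowerSeries ℚ) ^ n) ^ s) ≠ 0 := by
  rw [map_pow, constantCoeff_one_sub_X_pow n hn]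
  simp

/-- cancel: `f * ((1-X^n)^s)⁻¹ * (1-X^n)^s = f` -/
lemma inv_cancel_aux (n s : ℕ) (hn : 0 < n) (f : PowerSeries ℚ) :
    f * ((1 - (PowerSeries.X : PowerSeries ℚ) ^ n) ^ s)⁻¹ *
      (1 - (PowerSeries.X : PowerSeries ℚ) ^ n) ^ s = f := by
  rw [mul_assoc, PowerSeries.inv_mul_cancel _ (constantCoeff_pow_ne n s hn), mul_one]

lemma expand_one_sub_pow (n s : ℕ) (hn : 0 < n) :
    expand n ((1 - (PowerSeries.X : PowerSeries ℚ)) ^ s) =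
      (1 - (PowerSeries.X : PowerSeries ℚ) ^ n) ^ s := by
  have hcoe : (((1 - Polynomial.X : Polynomial ℚ) ^ s : Polynomial ℚ) : PowerSeries ℚ) =
      (1 - (PowerSeries.X : PowerSeries ℚ)) ^ s := by
    push_cast [Polynomial.coe_pow, Polynomial.coe_sub, Polynomial.coe_one, Polynomial.coe_X]
    rfl
  rw [← hcoe, expand_coe n hn]
  simp [map_pow, map_sub]

/-- The key slot identity. -/
lemma slot_eq (n s : ℕ) (hn : 0 < n) (P : Polynomial ℚ) :
    Polynomial.aeval ((PowerSeries.X : PowerSeries ℚ) ^ n) P *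
        ((1 - (PowerSeries.X : PowerSeries ℚ) ^ n) ^ s)⁻¹ =
      expand n ((P : PowerSeries ℚ) *
        (((1 - (PowerSeries.X : PowerSeries ℚ)) ^ s)⁻¹)) := by
  have h1 : expand n ((P : PowerSeries ℚ) * ((1 - (PowerSeries.X : PowerSeries ℚ)) ^ s)⁻¹) *
      (1 - (PowerSeries.X : PowerSeries ℚ) ^ n) ^ s =
      Polynomial.aeval ((PowerSeries.X : PowerSeries ℚ) ^ n) P := by
    rw [← expand_one_sub_pow n s hn, ← expand_mul n hn, mul_assoc,
      PowerSeries.inv_mul_cancel _ (by simp : PowerSeries.constantCoeff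
        ((1 - (PowerSeries.X : PowerSeries ℚ)) ^ s) ≠ 0), mul_one, expand_coe n hn]
  calc Polynomial.aeval ((PowerSeries.X : PowerSeries ℚ) ^ n) P *
        ((1 - (PowerSeries.X : PowerSeries ℚ) ^ n) ^ s)⁻¹
      = expand n ((P : PowerSeries ℚ) * ((1 - (PowerSeries.X : PowerSeries ℚ)) ^ s)⁻¹) *
          (1 - (PowerSeries.X : PowerSeries ℚ) ^ n) ^ s *
          ((1 - (PowerSeries.X : PowerSeries ℚ) ^ n) ^ s)⁻¹ := by rw [h1]
    _ = _ := by
        rw [mul_assoc, PowerSeries.mul_inv_cancel _ (constantCoeff_pow_ne n s hn), mul_one]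

/-- `f * (1-X)^(s-k) * ((1-X)^s)⁻¹ = f * ((1-X)^k)⁻¹` for `k ≤ s`. -/
lemma mul_pow_sub_inv (f : PowerSeries ℚ) (k s : ℕ) (hk : k ≤ s) :
    f * (1 - (PowerSeries.X : PowerSeries ℚ)) ^ (s - k) *
        (((1 - (PowerSeries.X : PowerSeries ℚ)) ^ s)⁻¹) =
      f * (((1 - (PowerSeries.X : PowerSeries ℚ)) ^ k)⁻¹) := by
  have hXne : (1 - (PowerSeries.X : PowerSeries ℚ)) ≠ 0 := by
    have := one_sub_X_pow_ne 1 one_pos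
    rwa [pow_one] at this
  apply mul_right_cancel₀ (pow_ne_zero k hXne)
  have hR : f * (((1 - (PowerSeries.X : PowerSeries ℚ)) ^ k)⁻¹) *
      (1 - (PowerSeries.X : PowerSeries ℚ)) ^ k = f := by
    rw [mul_assoc, PowerSeries.inv_mul_cancel _
      (by simp : PowerSeries.constantCoeff ((1 - (PowerSeries.X : PowerSeries ℚ)) ^ k) ≠ 0),
      mul_one]
  rw [hR]
  calc f * (1 - (PowerSeries.X : PowerSeries ℚ)) ^ (s - k) *
        ((1 - (PowerSeries.X : PowerSeries ℚ)) ^ s)⁻¹ *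
        (1 - (PowerSeries.X : PowerSeries ℚ)) ^ k
      = f * (((1 - (PowerSeries.X : PowerSeries ℚ)) ^ s)⁻¹ *
        ((1 - (PowerSeries.X : PowerSeries ℚ)) ^ (s - k) *
         (1 - (PowerSeries.X : PowerSeries ℚ)) ^ k)) := by ring
    _ = f * (((1 - (PowerSeries.X : PowerSeries ℚ)) ^ s)⁻¹ *
        (1 - (PowerSeries.X : PowerSeries ℚ)) ^ s) := by
          rw [← pow_add, Nat.sub_add_cancel hk]
    _ = f := by
          rw [PowerSeries.inv_mul_cancel _
            (by simp : PowerSeries.constantCoeff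
              ((1 - (PowerSeries.X : PowerSeries ℚ)) ^ s) ≠ 0), mul_one]


/-- Normal form for the q-MZV-type series: sum over pairs (u, v). -/
noncomputable def ZZ (l : ℕ) (d : Fin l → ℕ → ℚ) : PowerSeries ℚ :=
  PowerSeries.mk fun N =>
    ∑ uv ∈ ((Finset.Iic fun _ => N : Finset (Fin l → ℕ)) ×ˢ
          (Finset.Iic fun _ => N : Finset (Fin l → ℕ))).filter
        (fun uv => StrictAnti uv.1 ∧ (∀ j, 0 < uv.1 j) ∧ ∑ j, uv.1 j * uv.2 j = N),
      ∏ j, d j (uv.2 j)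

lemma coeff_prod_expand (l : ℕ) (n : Fin l → ℕ) (hn : ∀ j, 0 < n j)
    (f : Fin l → PowerSeries ℚ) (N : ℕ) :
    PowerSeries.coeff N (∏ j, expand (n j) (f j)) =
      ∑ m ∈ ((Finset.Iic fun _ => N : Finset (Fin l → ℕ))).filter
          (fun m => ∑ j, n j * m j = N),
        ∏ j, PowerSeries.coeff (m j) (f j) := by
  rw [PowerSeries.coeff_prod]
  have step1 : ∀ L ∈ Finset.finsuppAntidiag (Finset.univ : Finset (Fin l)) N,
      (∏ j, PowerSeries.coeff (L j) (expand (n j) (f j))) =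
      if (∀ j, n j ∣ L j) then ∏ j, PowerSeries.coeff (L j / n j) (f j) else 0 := by
    intro L _
    by_cases h : ∀ j, n j ∣ L j
    · rw [if_pos h]
      exact Finset.prod_congr rfl fun j _ => by rw [QMZV.coeff_expand, if_pos (h j)]
    · rw [if_neg h]
      push_neg at h
      obtain ⟨j, hj⟩ := h
      exact Finset.prod_eq_zero (Finset.mem_univ j) (by rw [QMZV.coeff_expand, if_neg hj])
  rw [Finset.sum_congr rfl step1, ← Finset.sum_filter]
  refine Finset.sum_nbij' (i := fun L => fun j => L j / n j)
    (j := fun m => Finsupp.equivFunOnFinite.symm (fun j => n j * m j)) ?_ ?_ ?_ ?_ ?_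
  · intro L hL
    simp only [Finset.mem_filter, Finset.mem_finsuppAntidiag] at hL
    obtain ⟨⟨hsum, -⟩, hdvd⟩ := hL
    simp only [Finset.mem_filter, Finset.mem_Iic]
    constructor
    · rw [Pi.le_def]
      intro j
      have h1 : L j ≤ N := hsum ▸ Finset.single_le_sum (f := fun j => L j)
        (fun _ _ => Nat.zero_le _) (Finset.mem_univ j)
      exact le_trans (Nat.div_le_self _ _) h1
    · rw [← hsum]
      exact Finset.sum_congr rfl fun j _ => Nat.mul_div_cancel' (hdvd j)
  · intro m hm
    simp only [Finset.mem_filter, Finset.mem_Iic] at hm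
    simp only [Finset.mem_filter, Finset.mem_finsuppAntidiag]
    refine ⟨⟨?_, Finset.subset_univ _⟩, fun j => ?_⟩
    · rw [← hm.2]
      exact Finset.sum_congr rfl fun j _ => by
        rw [Finsupp.equivFunOnFinite_symm_apply_apply]
    · rw [Finsupp.equivFunOnFinite_symm_apply_apply]
      exact Dvd.intro _ rfl
  · intro L hL
    simp only [Finset.mem_filter, Finset.mem_finsuppAntidiag] at hL
    ext j
    rw [Finsupp.equivFunOnFinite_symm_apply_apply]
    exact Nat.mul_div_cancel' (hL.2 j)
  · intro m hm
    funext j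
    show (Finsupp.equivFunOnFinite.symm fun j => n j * m j) j / n j = m j
    rw [Finsupp.equivFunOnFinite_symm_apply_apply]
    exact Nat.mul_div_cancel_left _ (hn j)
  · intro L hL
    rfl

/-- Every `ZQ` series is a `ZZ` normal form. -/
theorem ZQ_eq_ZZ (Q : ℕ → Polynomial ℚ) (l : ℕ) (s : Fin l → ℕ) :
    ZQ Q l s = ZZ l (fun j m => PowerSeries.coeff m ((Q (s j) : PowerSeries ℚ) *
      (((1 - (PowerSeries.X : PowerSeries ℚ)) ^ (s j))⁻¹))) := by
  ext N
  rw [ZQ, ZZ, PowerSeries.coeff_mk, PowerSeries.coeff_mk]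
  have step1 : ∀ n ∈ ((Finset.Iic fun _ => N : Finset (Fin l → ℕ))).filter
      (fun n => StrictAnti n ∧ ∀ j, 0 < n j),
      PowerSeries.coeff N
        (∏ j, Polynomial.aeval ((PowerSeries.X : PowerSeries ℚ) ^ n j) (Q (s j)) *
          ((1 - (PowerSeries.X : PowerSeries ℚ) ^ n j) ^ s j)⁻¹) =
      ∑ m ∈ ((Finset.Iic fun _ => N : Finset (Fin l → ℕ))).filter
          (fun m => ∑ j, n j * m j = N),
        ∏ j, PowerSeries.coeff (m j) ((Q (s j) : PowerSeries ℚ) *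
          (((1 - (PowerSeries.X : PowerSeries ℚ)) ^ (s j))⁻¹)) := by
    intro n hn
    simp only [Finset.mem_filter] at hn
    have hpos := hn.2.2
    have : (∏ j, Polynomial.aeval ((PowerSeries.X : PowerSeries ℚ) ^ n j) (Q (s j)) *
        ((1 - (PowerSeries.X : PowerSeries ℚ) ^ n j) ^ s j)⁻¹) =
        ∏ j, expand (n j) ((Q (s j) : PowerSeries ℚ) *
          (((1 - (PowerSeries.X : PowerSeries ℚ)) ^ (s j))⁻¹)) :=
      Finset.prod_congr rfl fun j _ => slot_eq (n j) (s j) (hpos j) (Q (s j))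
    rw [this, coeff_prod_expand l n hpos]
  rw [Finset.sum_congr rfl step1]
  rw [Finset.sum_filter, Finset.sum_filter, Finset.sum_product]
  refine Finset.sum_congr rfl fun n _ => ?_
  by_cases h : StrictAnti n ∧ ∀ j, 0 < n j
  · rw [if_pos h, Finset.sum_filter]
    refine Finset.sum_congr rfl fun m _ => ?_
    by_cases h2 : ∑ j, n j * m j = N
    · rw [if_pos h2, if_pos ⟨h.1, h.2, h2⟩]
    · rw [if_neg h2, if_neg (fun hc => h2 hc.2.2)]
  · rw [if_neg h]
    refine (Finset.sum_eq_zero fun m _ => ?_).symm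
    exact if_neg (fun hc => h ⟨hc.1, hc.2.1⟩)



/-- Numerator polynomials: `PPa t` is the numerator of `Σ_{v≥1} v^t x^v` over `(1-x)^(t+1)`. -/
noncomputable def PPa : ℕ → Polynomial ℚ
  | 0 => Polynomial.X
  | (t+1) => Polynomial.X * (1 - Polynomial.X) * derivative (PPa t) +
      Polynomial.C ((t : ℚ) + 1) * (Polynomial.X * PPa t)

/-- `FF s = Σ_{m ≥ 1} m^(s-1) X^m`. -/
noncomputable def FF (s : ℕ) : PowerSeries ℚ :=
  PowerSeries.mk fun m => if m = 0 then 0 else (m : ℚ) ^ (s - 1)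

lemma FF_succ (s : ℕ) (hs : 1 ≤ s) :
    FF (s + 1) = PowerSeries.X * (d⁄dX ℚ (FF s)) := by
  ext m
  cases m with
  | zero =>
      simp [FF, PowerSeries.coeff_zero_eq_constantCoeff]
  | succ k =>
      rw [FF, PowerSeries.coeff_mk, PowerSeries.coeff_succ_X_mul,
        PowerSeries.coeff_derivative, FF, PowerSeries.coeff_mk]
      simp only [Nat.succ_ne_zero, if_false, Nat.add_sub_cancel]
      have : (k + 1 : ℚ) ^ (s - 1) * (k + 1 : ℚ) = (k + 1 : ℚ) ^ s := by
        rw [← pow_succ]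
        congr 1
        omega
      push_cast
      rw [this]

lemma key_FF : ∀ t : ℕ,
    ((PPa t : Polynomial ℚ) : PowerSeries ℚ) =
      (1 - (PowerSeries.X : PowerSeries ℚ)) ^ (t + 1) * FF (t + 1) := by
  intro t
  induction t with
  | zero =>
      show ((Polynomial.X : Polynomial ℚ) : PowerSeries ℚ) = _
      rw [Polynomial.coe_X, pow_one]
      ext m
      rw [sub_mul, map_sub, one_mul]
      cases m with
      | zero => simp [FF, PowerSeries.coeff_zero_eq_constantCoeff]
      | succ k =>
          rw [PowerSeries.coeff_succ_X_mul, PowerSeries.coeff_X]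
          simp only [FF, PowerSeries.coeff_mk, Nat.succ_ne_zero, if_false]
          cases k with
          | zero => simp
          | succ k2 => simp
  | succ t ih =>
      have hder : d⁄dX ℚ ((PPa t : Polynomial ℚ) : PowerSeries ℚ) =
          ((derivative (PPa t) : Polynomial ℚ) : PowerSeries ℚ) :=
        PowerSeries.derivative_coe _
      set u : PowerSeries ℚ := 1 - PowerSeries.X with hu
      set F : PowerSeries ℚ := FF (t + 1) with hF
      have hdu : d⁄dX ℚ u = -1 := by
        rw [hu, map_sub]
        simp
      have hdup : d⁄dX ℚ (u ^ (t + 1)) = -((t + 1 : ℕ) : PowerSeries ℚ) * u ^ t := by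
        rw [Derivation.leibniz_pow, hdu, Nat.add_sub_cancel, smul_eq_mul, nsmul_eq_mul]
        push_cast
        ring
      have hdP : d⁄dX ℚ ((PPa t : Polynomial ℚ) : PowerSeries ℚ) =
          -((t + 1 : ℕ) : PowerSeries ℚ) * u ^ t * F + u ^ (t + 1) * d⁄dX ℚ F := by
        rw [ih, Derivation.leibniz, hdup, smul_eq_mul, smul_eq_mul]
        ring
      have hFF2 : FF (t + 2) = PowerSeries.X * (d⁄dX ℚ F) := FF_succ (t + 1) (by omega)
      show (((Polynomial.X * (1 - Polynomial.X) * derivative (PPa t) +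
        Polynomial.C ((t : ℚ) + 1) * (Polynomial.X * PPa t) :
        Polynomial ℚ)) : PowerSeries ℚ) = u ^ (t + 1 + 1) * FF (t + 1 + 1)
      simp only [Polynomial.coe_add, Polynomial.coe_mul, Polynomial.coe_sub,
        Polynomial.coe_one, Polynomial.coe_X, Polynomial.coe_C]
      rw [← hder, hdP, ih]
      have hc : PowerSeries.C ((t : ℚ) + 1) = ((t + 1 : ℕ) : PowerSeries ℚ) := by
        push_cast
        simp
      rw [hc]
      have h22 : t + 1 + 1 = t + 2 := by omega
      rw [h22, hFF2, ← hu]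
      ring

lemma PPa_coeff_zero (t : ℕ) : (PPa t).coeff 0 = 0 := by
  rw [Polynomial.coeff_zero_eq_eval_zero]
  induction t with
  | zero => simp [PPa]
  | succ t ih => simp [PPa]

lemma PPa_eval_one (t : ℕ) : (PPa t).eval 1 = (t.factorial : ℚ) := by
  induction t with
  | zero => simp [PPa]
  | succ t ih =>
      show Polynomial.eval 1 (Polynomial.X * (1 - Polynomial.X) * derivative (PPa t) +
        Polynomial.C ((t : ℚ) + 1) * (Polynomial.X * PPa t)) = _
      simp only [Polynomial.eval_add, Polynomial.eval_mul, Polynomial.eval_C,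
        Polynomial.eval_X, Polynomial.eval_sub, Polynomial.eval_one, ih]
      rw [Nat.factorial_succ]
      push_cast
      ring

lemma PPa_one : PPa 1 = Polynomial.X := by
  show Polynomial.X * (1 - Polynomial.X) * derivative (PPa 0) +
    Polynomial.C ((0 : ℚ) + 1) * (Polynomial.X * PPa 0) = Polynomial.X
  show Polynomial.X * (1 - Polynomial.X) * derivative (Polynomial.X : Polynomial ℚ) +
    Polynomial.C ((0 : ℚ) + 1) * (Polynomial.X * Polynomial.X) = Polynomial.X
  rw [Polynomial.derivative_X]
  norm_num
  ring

lemma PPa_natDegree : ∀ t : ℕ, 1 ≤ t → (PPa t).natDegree ≤ t := by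
  intro t
  induction t with
  | zero => omega
  | succ t ih =>
      intro _
      rcases Nat.eq_zero_or_pos t with rfl | ht'
      · rw [show (0:ℕ)+1 = 1 from rfl, PPa_one]
        simp
      · have hd : (PPa t).natDegree ≤ t := ih ht'
        show (Polynomial.X * (1 - Polynomial.X) * derivative (PPa t) +
          Polynomial.C ((t : ℚ) + 1) * (Polynomial.X * PPa t)).natDegree ≤ t + 1
        refine le_trans (Polynomial.natDegree_add_le _ _) ?_
        have h1 : (Polynomial.X * (1 - Polynomial.X) * derivative (PPa t)).natDegree ≤ t + 1 := by
          refine le_trans (Polynomial.natDegree_mul_le) ?_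
          have ha : (Polynomial.X * (1 - Polynomial.X) : Polynomial ℚ).natDegree ≤ 2 := by
            refine le_trans (Polynomial.natDegree_mul_le) ?_
            have : (1 - Polynomial.X : Polynomial ℚ).natDegree ≤ 1 := by
              refine le_trans (Polynomial.natDegree_sub_le _ _) ?_
              simp
            simp only [Polynomial.natDegree_X]
            omega
          have hb : (derivative (PPa t)).natDegree ≤ t - 1 :=
            le_trans (Polynomial.natDegree_derivative_le _) (by omega)
          omega
        have h2 : (Polynomial.C ((t : ℚ) + 1) * (Polynomial.X * PPa t)).natDegree ≤ t + 1 := by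
          refine le_trans (Polynomial.natDegree_C_mul_le _ _) ?_
          refine le_trans (Polynomial.natDegree_mul_le) ?_
          simp only [Polynomial.natDegree_X]
          omega
        omega



lemma natDegree_one_sub_X : (1 - Polynomial.X : Polynomial ℚ).natDegree = 1 := by
  have : (1 - Polynomial.X : Polynomial ℚ) = -(Polynomial.X - Polynomial.C 1) := by
    rw [map_one]; ring
  rw [this, Polynomial.natDegree_neg, Polynomial.natDegree_X_sub_C]

lemma one_sub_X_ne_zero : (1 - Polynomial.X : Polynomial ℚ) ≠ 0 := by
  intro h
  have := natDegree_one_sub_X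
  rw [h] at this
  simp at this

/-- Spanning lemma: any polynomial `P` with `P(0) = 0` and `deg P ≤ s-1` is a linear
combination of `Q k * (1-X)^(s-k)`, `2 ≤ k ≤ s`, when the `Q k` are admissible numerators. -/
lemma span_exists (Q : ℕ → Polynomial ℚ)
    (hQ1 : ∀ k, 2 ≤ k → (Q k).eval 1 ≠ 0)
    (hQ0 : ∀ k, 2 ≤ k → (Q k).coeff 0 = 0)
    (hQd : ∀ k, 2 ≤ k → (Q k).natDegree ≤ k - 1) :
    ∀ (s : ℕ) (P : Polynomial ℚ), P.coeff 0 = 0 → P.natDegree ≤ s - 1 →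
      ∃ c : ℕ → ℚ,
        P = ∑ k ∈ Finset.Icc 2 s, c k • (Q k * (1 - Polynomial.X) ^ (s - k)) := by
  intro s
  induction s with
  | zero =>
      intro P h0 hd
      refine ⟨0, ?_⟩
      have : P = Polynomial.C (P.coeff 0) :=
        Polynomial.eq_C_of_natDegree_le_zero (by omega)
      rw [this, h0]
      simp
  | succ s ih =>
      intro P h0 hd
      rcases Nat.eq_zero_or_pos s with rfl | hs
      · refine ⟨0, ?_⟩
        have : P = Polynomial.C (P.coeff 0) :=
          Polynomial.eq_C_of_natDegree_le_zero (by simpa using hd)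
        rw [this, h0]
        simp
      · have h2 : 2 ≤ s + 1 := by omega
        set c0 : ℚ := P.eval 1 / (Q (s+1)).eval 1 with hc0
        have hroot : (P - Polynomial.C c0 * Q (s+1)).IsRoot 1 := by
          simp only [Polynomial.IsRoot, Polynomial.eval_sub, Polynomial.eval_mul,
            Polynomial.eval_C, hc0]
          rw [div_mul_cancel₀ _ (hQ1 (s+1) h2)]
          ring
        obtain ⟨P2, hP2⟩ := Polynomial.dvd_iff_isRoot.2 hroot
        set P' : Polynomial ℚ := -P2 with hP'
        have hfac : P - Polynomial.C c0 * Q (s+1) = (1 - Polynomial.X) * P' := by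
          rw [hP2, hP', map_one]
          ring
        have hP'0 : P'.coeff 0 = 0 := by
          have heq := congrArg (Polynomial.eval 0) hfac
          simp only [Polynomial.eval_sub, Polynomial.eval_mul, Polynomial.eval_C,
            Polynomial.eval_one, Polynomial.eval_X, sub_zero, one_mul] at heq
          rw [Polynomial.coeff_zero_eq_eval_zero] at h0 ⊢
          have hq0 : (Q (s+1)).eval 0 = 0 := by
            rw [← Polynomial.coeff_zero_eq_eval_zero]
            exact hQ0 (s+1) h2
          rw [h0, hq0] at heq
          linarith [heq]
        have hP'd : P'.natDegree ≤ s - 1 := by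
          by_cases hz : P' = 0
          · rw [hz]; simp
          · have hmul : ((1 - Polynomial.X) * P').natDegree = 1 + P'.natDegree := by
              rw [Polynomial.natDegree_mul one_sub_X_ne_zero hz, natDegree_one_sub_X]
            have hboundP : P.natDegree ≤ s := by omega
            have hboundQ : (Polynomial.C c0 * Q (s+1)).natDegree ≤ s :=
              le_trans (Polynomial.natDegree_C_mul_le _ _)
                (by simpa using hQd (s+1) h2)
            have : ((1 - Polynomial.X) * P').natDegree ≤ s := by
              rw [← hfac]
              exact le_trans (Polynomial.natDegree_sub_le _ _) (by omega)
            omega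
        obtain ⟨c, hc⟩ := ih P' hP'0 hP'd
        refine ⟨fun k => if k = s+1 then c0 else c k, ?_⟩
        rw [Finset.sum_Icc_succ_top h2]
        have hterms : ∀ k ∈ Finset.Icc 2 s,
            (if k = s+1 then c0 else c k) • (Q k * (1 - Polynomial.X) ^ (s + 1 - k)) =
            (c k • (Q k * (1 - Polynomial.X) ^ (s - k))) * (1 - Polynomial.X) := by
          intro k hk
          rw [Finset.mem_Icc] at hk
          rw [if_neg (by omega)]
          have hpow : s + 1 - k = (s - k) + 1 := by omega
          rw [hpow, pow_succ, smul_mul_assoc]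
          ring_nf
        rw [Finset.sum_congr rfl hterms, ← Finset.sum_mul, ← hc]
        have hbeta : (fun k => if k = s+1 then c0 else c k) (s+1) = c0 := by simp
        rw [hbeta]
        have : P = Polynomial.C c0 * Q (s+1) + (1 - Polynomial.X) * P' := by
          linear_combination hfac
        rw [this]
        rw [Nat.sub_self, pow_zero, mul_one, Polynomial.smul_eq_C_mul]
        ring



section Main

/-- linearity of coefficients of `R/(1-X)^s0` in a decomposition of `R`. -/
lemma dd_linear (QF : ℕ → Polynomial ℚ) (s0 : ℕ) (c : ℕ → ℚ) (R : Polynomial ℚ)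
    (hc : R = ∑ k ∈ Finset.Icc 2 s0, c k • (QF k * (1 - Polynomial.X) ^ (s0 - k))) (m : ℕ) :
    PowerSeries.coeff m ((R : PowerSeries ℚ) *
        (((1 - (PowerSeries.X : PowerSeries ℚ)) ^ s0)⁻¹)) =
      ∑ k ∈ Finset.Icc 2 s0, c k * PowerSeries.coeff m ((QF k : PowerSeries ℚ) *
        (((1 - (PowerSeries.X : PowerSeries ℚ)) ^ k)⁻¹)) := by
  have hcoe : (R : PowerSeries ℚ) = ∑ k ∈ Finset.Icc 2 s0,
      PowerSeries.C (c k) * ((QF k : PowerSeries ℚ) *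
        (1 - (PowerSeries.X : PowerSeries ℚ)) ^ (s0 - k)) := by
    rw [hc, ← Polynomial.coeToPowerSeries.ringHom_apply, map_sum]
    refine Finset.sum_congr rfl fun k _ => ?_
    rw [Polynomial.smul_eq_C_mul, map_mul, map_mul]
    simp only [Polynomial.coeToPowerSeries.ringHom_apply, Polynomial.coe_C]
    congr 1
    rw [Polynomial.coe_pow, Polynomial.coe_sub, Polynomial.coe_one, Polynomial.coe_X]
  rw [hcoe, Finset.sum_mul, map_sum]
  refine Finset.sum_congr rfl fun k hk => ?_
  rw [Finset.mem_Icc] at hk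
  have : PowerSeries.C (c k) * ((QF k : PowerSeries ℚ) *
      (1 - (PowerSeries.X : PowerSeries ℚ)) ^ (s0 - k)) *
      ((1 - (PowerSeries.X : PowerSeries ℚ)) ^ s0)⁻¹ =
      PowerSeries.C (c k) * ((QF k : PowerSeries ℚ) *
        ((1 - (PowerSeries.X : PowerSeries ℚ)) ^ k)⁻¹) := by
    rw [mul_assoc]
    congr 1
    rw [← mul_pow_sub_inv (QF k : PowerSeries ℚ) k s0 hk.2, mul_assoc]
  rw [this, PowerSeries.coeff_C_mul]

/-- Multilinear expansion of `ZZ`. -/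
lemma ZZ_multilinear (l : ℕ) (K : Fin l → Finset ℕ) (c : Fin l → ℕ → ℚ) (e : ℕ → ℕ → ℚ) :
    ZZ l (fun j m => ∑ k ∈ K j, c j k * e k m) =
      ∑ p ∈ Fintype.piFinset K, (∏ j, c j (p j)) • ZZ l (fun j => e (p j)) := by
  ext N
  rw [map_sum]
  simp only [PowerSeries.coeff_smul, smul_eq_mul, ZZ, PowerSeries.coeff_mk]
  have h1 : ∀ uv : (Fin l → ℕ) × (Fin l → ℕ),
      (∏ j, ∑ k ∈ K j, c j k * e k (uv.2 j)) =
      ∑ p ∈ Fintype.piFinset K, (∏ j, c j (p j)) * ∏ j, e (p j) (uv.2 j) := by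
    intro uv
    rw [Finset.prod_univ_sum]
    exact Finset.sum_congr rfl fun p _ => by rw [← Finset.prod_mul_distrib]
  rw [Finset.sum_congr rfl fun uv _ => h1 uv, Finset.sum_comm]
  exact Finset.sum_congr rfl fun p _ => by rw [← Finset.mul_sum]

/-- The generating set of `ZQ`-values for a family `Q`. -/
def genSet (Q : ℕ → Polynomial ℚ) : Set (PowerSeries ℚ) :=
  {f | ∃ (l : ℕ) (s : Fin l → ℕ), (∀ j, 2 ≤ s j) ∧ f = ZQ Q l s}

/-- Main span-comparison lemma. -/
lemma ZQ_mem_span (Q R : ℕ → Polynomial ℚ)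
    (hQ1 : ∀ k, 2 ≤ k → (Q k).eval 1 ≠ 0)
    (hQ0 : ∀ k, 2 ≤ k → (Q k).coeff 0 = 0)
    (hQd : ∀ k, 2 ≤ k → (Q k).natDegree ≤ k - 1)
    (hR0 : ∀ k, 2 ≤ k → (R k).coeff 0 = 0)
    (hRd : ∀ k, 2 ≤ k → (R k).natDegree ≤ k - 1)
    (l : ℕ) (s : Fin l → ℕ) (hs : ∀ j, 2 ≤ s j) :
    ZQ R l s ∈ Submodule.span ℚ (genSet Q) := by
  have hchoice : ∀ j : Fin l, ∃ c : ℕ → ℚ,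
      R (s j) = ∑ k ∈ Finset.Icc 2 (s j), c k • (Q k * (1 - Polynomial.X) ^ (s j - k)) :=
    fun j => span_exists Q hQ1 hQ0 hQd (s j) (R (s j)) (hR0 _ (hs j)) (hRd _ (hs j))
  choose c hc using hchoice
  have hd : (fun (j : Fin l) (m : ℕ) => PowerSeries.coeff m ((R (s j) : PowerSeries ℚ) *
      (((1 - (PowerSeries.X : PowerSeries ℚ)) ^ (s j))⁻¹))) =
      fun j m => ∑ k ∈ Finset.Icc 2 (s j), c j k *
        PowerSeries.coeff m ((Q k : PowerSeries ℚ) *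
          (((1 - (PowerSeries.X : PowerSeries ℚ)) ^ k)⁻¹)) := by
    funext j m
    exact dd_linear Q (s j) (c j) (R (s j)) (hc j) m
  rw [ZQ_eq_ZZ R l s, hd,
    ZZ_multilinear l (fun j => Finset.Icc 2 (s j)) c
      (fun k m => PowerSeries.coeff m ((Q k : PowerSeries ℚ) *
        (((1 - (PowerSeries.X : PowerSeries ℚ)) ^ k)⁻¹)))]
  refine Submodule.sum_mem _ fun p hp => Submodule.smul_mem _ _ (Submodule.subset_span ?_)
  rw [Fintype.mem_piFinset] at hp
  refine ⟨l, fun j => p j, fun j => (Finset.mem_Icc.1 (hp j)).1, ?_⟩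
  rw [ZQ_eq_ZZ Q l (fun j => p j)]

/-- The bracket family: `PPol s = PPa (s-1)`. -/
noncomputable def PPol (s : ℕ) : Polynomial ℚ := PPa (s - 1)

lemma dd_PPol (s : ℕ) (hs : 1 ≤ s) (m : ℕ) :
    PowerSeries.coeff m ((PPol s : PowerSeries ℚ) *
        (((1 - (PowerSeries.X : PowerSeries ℚ)) ^ s)⁻¹)) =
      if m = 0 then 0 else (m : ℚ) ^ (s - 1) := by
  have hk : ((PPol s : Polynomial ℚ) : PowerSeries ℚ) =
      (1 - (PowerSeries.X : PowerSeries ℚ)) ^ s * FF s := by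
    have := key_FF (s - 1)
    rwa [Nat.sub_add_cancel hs] at this
  rw [hk, mul_comm ((1 - (PowerSeries.X : PowerSeries ℚ)) ^ s) (FF s), mul_assoc,
    PowerSeries.mul_inv_cancel _ (by
      rw [map_pow]
      simp : PowerSeries.constantCoeff ((1 - (PowerSeries.X : PowerSeries ℚ)) ^ s) ≠ 0),
    mul_one, FF, PowerSeries.coeff_mk]

lemma bracket_eq_ZQ_PPol (l : ℕ) (s : Fin l → ℕ) (hs : ∀ j, 2 ≤ s j) :
    bracket l s = (∏ j, ((s j - 1).factorial : ℚ))⁻¹ • ZQ PPol l s := by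
  have hZZ : ZQ PPol l s = ZZ l (fun j m => if m = 0 then 0 else (m : ℚ) ^ (s j - 1)) := by
    rw [ZQ_eq_ZZ PPol l s]
    have hfun : (fun (j : Fin l) (m : ℕ) => PowerSeries.coeff m ((PPol (s j) : PowerSeries ℚ) *
        (((1 - (PowerSeries.X : PowerSeries ℚ)) ^ (s j))⁻¹))) =
        (fun (j : Fin l) (m : ℕ) => if m = 0 then 0 else (m : ℚ) ^ (s j - 1)) := by
      funext j m
      exact dd_PPol (s j) (by have := hs j; omega) m
    rw [hfun]
  rw [hZZ]
  ext N
  rw [bracket, PowerSeries.coeff_mk, PowerSeries.coeff_smul, ZZ, PowerSeries.coeff_mk,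
    smul_eq_mul]
  congr 1
  have hsub : ((Finset.Iic fun _ => N : Finset (Fin l → ℕ)) ×ˢ
        (Finset.Iic fun _ => N : Finset (Fin l → ℕ))).filter
        (fun uv => StrictAnti uv.1 ∧ (∀ j, 0 < uv.1 j) ∧ (∀ j, 0 < uv.2 j) ∧
          ∑ j, uv.1 j * uv.2 j = N) ⊆
      ((Finset.Iic fun _ => N : Finset (Fin l → ℕ)) ×ˢ
        (Finset.Iic fun _ => N : Finset (Fin l → ℕ))).filter
        (fun uv => StrictAnti uv.1 ∧ (∀ j, 0 < uv.1 j) ∧ ∑ j, uv.1 j * uv.2 j = N) := by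
    intro uv huv
    simp only [Finset.mem_filter] at huv ⊢
    exact ⟨huv.1, huv.2.1, huv.2.2.1, huv.2.2.2.2⟩
  have h1 : ∑ uv ∈ ((Finset.Iic fun _ => N : Finset (Fin l → ℕ)) ×ˢ
        (Finset.Iic fun _ => N : Finset (Fin l → ℕ))).filter
        (fun uv => StrictAnti uv.1 ∧ (∀ j, 0 < uv.1 j) ∧ (∀ j, 0 < uv.2 j) ∧
          ∑ j, uv.1 j * uv.2 j = N),
      ∏ j, ((uv.2 j : ℚ)) ^ (s j - 1) =
      ∑ uv ∈ ((Finset.Iic fun _ => N : Finset (Fin l → ℕ)) ×ˢ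
        (Finset.Iic fun _ => N : Finset (Fin l → ℕ))).filter
        (fun uv => StrictAnti uv.1 ∧ (∀ j, 0 < uv.1 j) ∧ (∀ j, 0 < uv.2 j) ∧
          ∑ j, uv.1 j * uv.2 j = N),
      ∏ j, (if uv.2 j = 0 then 0 else (uv.2 j : ℚ) ^ (s j - 1)) := by
    refine Finset.sum_congr rfl fun uv huv => Finset.prod_congr rfl fun j _ => ?_
    simp only [Finset.mem_filter] at huv
    rw [if_neg (huv.2.2.2.1 j).ne']
  rw [h1]
  refine Finset.sum_subset hsub fun uv huv hnuv => ?_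
  simp only [Finset.mem_filter] at huv hnuv
  have : ¬ ∀ j, 0 < uv.2 j := by
    intro hpos
    exact hnuv ⟨huv.1, huv.2.1, huv.2.2.1, hpos, huv.2.2.2⟩
  push_neg at this
  obtain ⟨j, hj⟩ := this
  have hj0 : uv.2 j = 0 := by omega
  exact Finset.prod_eq_zero (Finset.mem_univ j) (by rw [if_pos hj0])

end Main
end QMZV

/-- the span of Okounkov's q-multiple zeta values equals `MD^♯`. -/
theorem qMZV_eq_MDsharp : qMZV = MDsharp := by
  have hQO1 : ∀ k, 2 ≤ k → (QO k).eval 1 ≠ 0 := by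
    intro k hk
    rw [QO]
    split_ifs with h <;> simp
  have hQO0 : ∀ k, 2 ≤ k → (QO k).coeff 0 = 0 := by
    intro k hk
    rw [Polynomial.coeff_zero_eq_eval_zero, QO]
    split_ifs with h
    · have : k / 2 ≠ 0 := by omega
      simp [zero_pow this]
    · have : (k - 1) / 2 ≠ 0 := by omega
      simp [zero_pow this]
  have hQOd : ∀ k, 2 ≤ k → (QO k).natDegree ≤ k - 1 := by
    intro k hk
    rw [QO]
    split_ifs with h
    · rw [Polynomial.natDegree_X_pow]
      omega
    · refine le_trans Polynomial.natDegree_mul_le ?_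
      have h1 : (1 + Polynomial.X : Polynomial ℚ).natDegree ≤ 1 := by
        refine le_trans (Polynomial.natDegree_add_le _ _) ?_
        simp
      rw [Polynomial.natDegree_X_pow]
      omega
  have hP1 : ∀ k, 2 ≤ k → (QMZV.PPol k).eval 1 ≠ 0 := by
    intro k hk
    rw [QMZV.PPol, QMZV.PPa_eval_one]
    exact_mod_cast Nat.cast_ne_zero.2 (Nat.factorial_ne_zero _)
  have hP0 : ∀ k, 2 ≤ k → (QMZV.PPol k).coeff 0 = 0 := fun k _ => QMZV.PPa_coeff_zero _
  have hPd : ∀ k, 2 ≤ k → (QMZV.PPol k).natDegree ≤ k - 1 := fun k hk =>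
    QMZV.PPa_natDegree (k - 1) (by omega)
  have hfact : ∀ (l : ℕ) (s : Fin l → ℕ), (∏ j, ((s j - 1).factorial : ℚ)) ≠ 0 := by
    intro l s
    refine Finset.prod_ne_zero_iff.2 fun j _ => ?_
    exact_mod_cast Nat.cast_ne_zero.2 (Nat.factorial_ne_zero _)
  have hq : qMZV = Submodule.span ℚ (QMZV.genSet QO) := rfl
  have hMD : MDsharp = Submodule.span ℚ (QMZV.genSet QMZV.PPol) := by
    apply le_antisymm
    · refine Submodule.span_le.2 ?_
      rintro f ⟨l, s, hs, rfl⟩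
      rw [QMZV.bracket_eq_ZQ_PPol l s hs]
      exact Submodule.smul_mem _ _ (Submodule.subset_span ⟨l, s, hs, rfl⟩)
    · refine Submodule.span_le.2 ?_
      rintro f ⟨l, s, hs, rfl⟩
      have : ZQ QMZV.PPol l s = (∏ j, ((s j - 1).factorial : ℚ)) • bracket l s := by
        rw [QMZV.bracket_eq_ZQ_PPol l s hs, smul_smul,
          mul_inv_cancel₀ (hfact l s), one_smul]
      rw [this]
      exact Submodule.smul_mem _ _ (Submodule.subset_span ⟨l, s, hs, rfl⟩)
  rw [hq, hMD]
  apply le_antisymm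
  · refine Submodule.span_le.2 ?_
    rintro f ⟨l, s, hs, rfl⟩
    exact QMZV.ZQ_mem_span QMZV.PPol QO hP1 hP0 hPd hQO0 hQOd l s hs
  · refine Submodule.span_le.2 ?_
    rintro f ⟨l, s, hs, rfl⟩
    exact QMZV.ZQ_mem_span QO QMZV.PPol hQO1 hQO0 hQOd hP0 hPd l s hs
end

section
/- Let S ⊆ ℕ and let {Q_s}_{s∈S} be polynomials in ℚ[t] with Q_s(0) = 0 and Q_s(1) ≠ 0. Suppose that for each r,s ∈ S there exist rationals λ_j(r,s) (for j ∈ S with 1 ≤ j ≤ r+s) such that Q_r(t)·Q_s(t) = Σ_{j ∈ S, 1 ≤ j ≤ r+s} λ_j(r,s)·(1−t)^{r+s−j}·Q_j(t) in ℚ[t]. Then the ℚ-vector space Z(Q,S) is closed under multiplication, i.e. Z(Q,S) is a ℚ-subalgebra of ℚ⟦q⟧. -/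
open Polynomial

open scoped Classical

namespace ZQaux

noncomputable def Fq (Q : ℕ → Polynomial ℚ) (a k : ℕ) : PowerSeries ℚ :=
  Polynomial.aeval ((PowerSeries.X : PowerSeries ℚ) ^ k) (Q a) *
    ((1 - (PowerSeries.X : PowerSeries ℚ) ^ k) ^ a)⁻¹

noncomputable def Zb (Q : ℕ → Polynomial ℚ) : ℕ → List ℕ → PowerSeries ℚ
  | _, [] => 1
  | M, a :: w => ∑ k ∈ Finset.Ico 1 M, Fq Q a k * Zb Q k w

noncomputable def qsh (L : ℕ → ℕ → ℕ → ℚ) : List ℕ → List ℕ → (List ℕ →₀ ℚ)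
  | [], v => Finsupp.single v 1
  | a :: u, [] => Finsupp.single (a :: u) 1
  | a :: u, b :: v =>
      (qsh L u (b :: v)).mapDomain (a :: ·) + (qsh L (a :: u) v).mapDomain (b :: ·) +
        ∑ j ∈ Finset.Icc 1 (a + b), L a b j • (qsh L u v).mapDomain (j :: ·)
  termination_by u v => u.length + v.length

noncomputable def Zfull (Q : ℕ → Polynomial ℚ) (w : List ℕ) : PowerSeries ℚ :=
  PowerSeries.mk fun N => PowerSeries.coeff N (Zb Q (N + 1) w)

noncomputable def Dset (M l : ℕ) : Finset (Fin l → ℕ) :=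
  ((Finset.Iic fun _ => M : Finset (Fin l → ℕ))).filter
    (fun n => StrictAnti n ∧ (∀ j, 0 < n j) ∧ ∀ j, n j < M)

lemma X_pow_dvd_Fq (Q : ℕ → Polynomial ℚ) (a k : ℕ) (h : (Q a).eval 0 = 0) :
    (PowerSeries.X : PowerSeries ℚ) ^ k ∣ Fq Q a k := by
  have hX : Polynomial.X ∣ Q a := by
    rw [Polynomial.X_dvd_iff, ← Polynomial.coeff_zero_eq_eval_zero] at *
    exact h
  obtain ⟨R, hR⟩ := hX
  refine Dvd.dvd.mul_right ⟨Polynomial.aeval ((PowerSeries.X : PowerSeries ℚ) ^ k) R, ?_⟩ _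
  rw [hR, map_mul, Polynomial.aeval_X]

lemma coeff_Fq_mul (Q : ℕ → Polynomial ℚ) (a k : ℕ) (h : (Q a).eval 0 = 0)
    (g : PowerSeries ℚ) {i : ℕ} (hi : i < k) :
    PowerSeries.coeff i (Fq Q a k * g) = 0 := by
  have : (PowerSeries.X : PowerSeries ℚ) ^ k ∣ Fq Q a k * g :=
    Dvd.dvd.mul_right (X_pow_dvd_Fq Q a k h) g
  exact PowerSeries.X_pow_dvd_iff.1 this i hi

lemma Fq_mul_Fq (Q : ℕ → Polynomial ℚ) {a b : ℕ} (L : ℕ → ℚ)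
    (hQ : Q a * Q b =
      ∑ j ∈ Finset.Icc 1 (a + b), Polynomial.C (L j) * (1 - Polynomial.X) ^ (a + b - j) * Q j)
    {k : ℕ} (hk : 1 ≤ k) :
    Fq Q a k * Fq Q b k = ∑ j ∈ Finset.Icc 1 (a + b), L j • Fq Q j k := by
  set y : PowerSeries ℚ := PowerSeries.X ^ k with hy
  set u : PowerSeries ℚ := 1 - y with hudef
  have hyc : PowerSeries.constantCoeff y = 0 := by
    rw [hy, map_pow, PowerSeries.constantCoeff_X, zero_pow (by omega)]
  have hu : PowerSeries.constantCoeff u ≠ 0 := by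
    rw [hudef, map_sub, hyc, map_one, sub_zero]; exact one_ne_zero
  have hum : ∀ m : ℕ, (u ^ m) * (u ^ m)⁻¹ = 1 := fun m =>
    PowerSeries.mul_inv_cancel _ (by rw [map_pow]; exact pow_ne_zero _ hu)
  have hune : u ^ (a + b) ≠ 0 := pow_ne_zero _ (fun h => hu (by rw [h, map_zero]))
  apply mul_left_cancel₀ hune
  have lhs : u ^ (a + b) * (Fq Q a k * Fq Q b k) =
      Polynomial.aeval y (Q a * Q b) := by
    rw [map_mul, Fq, Fq, pow_add]
    calc u ^ a * u ^ b *
        (Polynomial.aeval y (Q a) * (u ^ a)⁻¹ * (Polynomial.aeval y (Q b) * (u ^ b)⁻¹))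
        = (u ^ a * (u ^ a)⁻¹) * (u ^ b * (u ^ b)⁻¹) *
            (Polynomial.aeval y (Q a) * Polynomial.aeval y (Q b)) := by ring
      _ = Polynomial.aeval y (Q a) * Polynomial.aeval y (Q b) := by
            rw [hum a, hum b, one_mul, one_mul]
  rw [lhs, hQ, map_sum, Finset.mul_sum]
  refine Finset.sum_congr rfl fun j hj => ?_
  have hjle : j ≤ a + b := (Finset.mem_Icc.1 hj).2
  rw [map_mul, map_mul, Polynomial.aeval_C, map_pow, map_sub, map_one, Polynomial.aeval_X]
  rw [Fq, ← hy, ← hudef]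
  have : u ^ (a + b) = u ^ (a + b - j) * u ^ j := by
    rw [← pow_add]; congr 1; omega
  rw [this, Algebra.smul_def]
  rw [show u ^ (a + b - j) * u ^ j *
        ((algebraMap ℚ (PowerSeries ℚ)) (L j) *
          (Polynomial.aeval y (Q j) * (u ^ j)⁻¹)) =
      (u ^ j * (u ^ j)⁻¹) *
        ((algebraMap ℚ (PowerSeries ℚ)) (L j) * (u ^ (a + b - j) * Polynomial.aeval y (Q j)))
      from by ring, hum j, one_mul]
  ring

lemma sq_split {R : Type*} [CommRing R] (M : ℕ) (f g : ℕ → R) :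
    (∑ k ∈ Finset.Ico 1 M, f k) * (∑ l ∈ Finset.Ico 1 M, g l) =
      (∑ k ∈ Finset.Ico 1 M, f k * (∑ l ∈ Finset.Ico 1 k, g l)) +
      (∑ l ∈ Finset.Ico 1 M, (∑ k ∈ Finset.Ico 1 l, f k) * g l) +
      ∑ k ∈ Finset.Ico 1 M, f k * g k := by
  induction M with
  | zero => simp
  | succ M ih =>
    rcases Nat.eq_zero_or_pos M with h | h
    · subst h; simp
    rw [Finset.sum_Ico_succ_top h, Finset.sum_Ico_succ_top h,
      Finset.sum_Ico_succ_top (f := fun k => f k * (∑ l ∈ Finset.Ico 1 k, g l)) h,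
      Finset.sum_Ico_succ_top (f := fun l => (∑ k ∈ Finset.Ico 1 l, f k) * g l) h,
      Finset.sum_Ico_succ_top (f := fun k => f k * g k) h]
    have := ih
    ring_nf
    ring_nf at this
    linear_combination this

lemma key_push (Q : ℕ → Polynomial ℚ) (a M : ℕ) (q : List ℕ →₀ ℚ) :
    ∑ k ∈ Finset.Ico 1 M, Fq Q a k * (Finsupp.linearCombination ℚ (Zb Q k)) q =
      Finsupp.linearCombination ℚ (Zb Q M) (q.mapDomain (a :: ·)) := by
  rw [Finsupp.linearCombination_mapDomain]
  simp only [Finsupp.linearCombination_apply, Finsupp.sum, Function.comp]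
  calc ∑ k ∈ Finset.Ico 1 M, Fq Q a k * ∑ w ∈ q.support, q w • Zb Q k w
      = ∑ k ∈ Finset.Ico 1 M, ∑ w ∈ q.support, q w • (Fq Q a k * Zb Q k w) := by
        refine Finset.sum_congr rfl fun k _ => ?_
        rw [Finset.mul_sum]
        exact Finset.sum_congr rfl fun w _ => (mul_smul_comm _ _ _)
    _ = ∑ w ∈ q.support, ∑ k ∈ Finset.Ico 1 M, q w • (Fq Q a k * Zb Q k w) :=
        Finset.sum_comm
    _ = ∑ w ∈ q.support, q w • Zb Q M (a :: w) := by
        refine Finset.sum_congr rfl fun w _ => ?_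
        rw [← Finset.smul_sum]
        rfl

lemma stuffle (S : Set ℕ) (Q : ℕ → Polynomial ℚ) (L : ℕ → ℕ → ℕ → ℚ)
    (hL : ∀ a ∈ S, ∀ b ∈ S, Q a * Q b =
      ∑ j ∈ Finset.Icc 1 (a + b), Polynomial.C (L a b j) * (1 - Polynomial.X) ^ (a + b - j) * Q j) :
    ∀ (n : ℕ) (u v : List ℕ), u.length + v.length ≤ n →
      (∀ x ∈ u, x ∈ S) → (∀ x ∈ v, x ∈ S) → ∀ M,
      Zb Q M u * Zb Q M v = Finsupp.linearCombination ℚ (Zb Q M) (qsh L u v) := by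
  intro n
  induction n with
  | zero =>
    rintro u v hlen hu hv M
    obtain rfl : u = [] := List.length_eq_zero_iff.1 (by omega)
    obtain rfl : v = [] := List.length_eq_zero_iff.1 (by omega)
    simp [Zb, qsh, Finsupp.linearCombination_single]
  | succ n ih =>
    rintro (_ | ⟨a, u⟩) v hlen hu hv M
    · simp [Zb, qsh, Finsupp.linearCombination_single]
    rcases v with _ | ⟨b, v⟩
    · simp [Zb, qsh, Finsupp.linearCombination_single]
    have hu' : ∀ x ∈ u, x ∈ S := fun x hx => hu x (List.mem_cons_of_mem _ hx)
    have hv' : ∀ x ∈ v, x ∈ S := fun x hx => hv x (List.mem_cons_of_mem _ hx)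
    have ha : a ∈ S := hu a (List.mem_cons_self)
    have hb : b ∈ S := hv b (List.mem_cons_self)
    have hZu : Zb Q M (a :: u) = ∑ k ∈ Finset.Ico 1 M, Fq Q a k * Zb Q k u := rfl
    have hZv : Zb Q M (b :: v) = ∑ l ∈ Finset.Ico 1 M, Fq Q b l * Zb Q l v := rfl
    rw [hZu, hZv, sq_split]
    have piece1 : (∑ k ∈ Finset.Ico 1 M,
        Fq Q a k * Zb Q k u * (∑ l ∈ Finset.Ico 1 k, Fq Q b l * Zb Q l v)) =
        Finsupp.linearCombination ℚ (Zb Q M) ((qsh L u (b :: v)).mapDomain (a :: ·)) := by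
      rw [← key_push]
      refine Finset.sum_congr rfl fun k _ => ?_
      rw [← ih u (b :: v) (by simp at hlen ⊢; omega) hu' hv k]
      show Fq Q a k * Zb Q k u * Zb Q k (b :: v) = _
      ring
    have piece2 : (∑ l ∈ Finset.Ico 1 M,
        (∑ k ∈ Finset.Ico 1 l, Fq Q a k * Zb Q k u) * (Fq Q b l * Zb Q l v)) =
        Finsupp.linearCombination ℚ (Zb Q M) ((qsh L (a :: u) v).mapDomain (b :: ·)) := by
      rw [← key_push]
      refine Finset.sum_congr rfl fun l _ => ?_
      rw [← ih (a :: u) v (by simp at hlen ⊢; omega) hu hv' l]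
      show Zb Q l (a :: u) * (Fq Q b l * Zb Q l v) = _
      ring
    have piece3 : (∑ k ∈ Finset.Ico 1 M,
        Fq Q a k * Zb Q k u * (Fq Q b k * Zb Q k v)) =
        Finsupp.linearCombination ℚ (Zb Q M)
          (∑ j ∈ Finset.Icc 1 (a + b), L a b j • (qsh L u v).mapDomain (j :: ·)) := by
      have step1 : ∀ k ∈ Finset.Ico 1 M,
          Fq Q a k * Zb Q k u * (Fq Q b k * Zb Q k v) =
          ∑ j ∈ Finset.Icc 1 (a + b),
            L a b j • (Fq Q j k * (Finsupp.linearCombination ℚ (Zb Q k)) (qsh L u v)) := by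
        intro k hk
        have h1 : (1 : ℕ) ≤ k := (Finset.mem_Ico.1 hk).1
        have : Fq Q a k * Zb Q k u * (Fq Q b k * Zb Q k v) =
            (Fq Q a k * Fq Q b k) * (Zb Q k u * Zb Q k v) := by ring
        rw [this, Fq_mul_Fq Q (L a b) (hL a ha b hb) h1,
          ih u v (by simp at hlen ⊢; omega) hu' hv' k, Finset.sum_mul]
        exact Finset.sum_congr rfl fun j _ => smul_mul_assoc _ _ _
      rw [Finset.sum_congr rfl step1, Finset.sum_comm, map_sum]
      refine Finset.sum_congr rfl fun j _ => ?_
      rw [map_smul, ← key_push, Finset.smul_sum]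
    rw [piece1, piece2, piece3, show qsh L (a :: u) (b :: v) =
      (qsh L u (b :: v)).mapDomain (a :: ·) + (qsh L (a :: u) v).mapDomain (b :: ·) +
        ∑ j ∈ Finset.Icc 1 (a + b), L a b j • (qsh L u v).mapDomain (j :: ·) from by
          rw [qsh], map_add, map_add]

lemma qsh_letters (S : Set ℕ) (L : ℕ → ℕ → ℕ → ℚ)
    (hL : ∀ a ∈ S, ∀ b ∈ S, ∀ j, L a b j ≠ 0 → j ∈ S) :
    ∀ (n : ℕ) (u v : List ℕ), u.length + v.length ≤ n →
      (∀ x ∈ u, x ∈ S) → (∀ x ∈ v, x ∈ S) →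
      ∀ w ∈ (qsh L u v).support, ∀ x ∈ w, x ∈ S := by
  intro n
  induction n with
  | zero =>
    rintro u v hlen hu hv w hw
    obtain rfl : u = [] := List.length_eq_zero_iff.1 (by omega)
    obtain rfl : v = [] := List.length_eq_zero_iff.1 (by omega)
    rw [show qsh L [] [] = Finsupp.single [] 1 from by rw [qsh]] at hw
    have := Finsupp.support_single_subset hw
    simp only [Finset.mem_singleton] at this
    subst this; simp
  | succ n ih =>
    rintro (_ | ⟨a, u⟩) v hlen hu hv w hw
    · rw [show qsh L [] v = Finsupp.single v 1 from by rw [qsh]] at hw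
      have := Finsupp.support_single_subset hw
      simp only [Finset.mem_singleton] at this
      subst this; exact hv
    rcases v with _ | ⟨b, v⟩
    · rw [show qsh L (a :: u) [] = Finsupp.single (a :: u) 1 from by rw [qsh]] at hw
      have := Finsupp.support_single_subset hw
      simp only [Finset.mem_singleton] at this
      subst this; exact hu
    have hu' : ∀ x ∈ u, x ∈ S := fun x hx => hu x (List.mem_cons_of_mem _ hx)
    have hv' : ∀ x ∈ v, x ∈ S := fun x hx => hv x (List.mem_cons_of_mem _ hx)
    have ha : a ∈ S := hu a (List.mem_cons_self)
    have hb : b ∈ S := hv b (List.mem_cons_self)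
    rw [show qsh L (a :: u) (b :: v) = _ from by rw [qsh]] at hw
    have hw' := Finsupp.support_add hw
    rw [Finset.mem_union] at hw'
    rcases hw' with hw' | hw'
    · have hw'' := Finsupp.support_add hw'
      rw [Finset.mem_union] at hw''
      rcases hw'' with hw'' | hw''
      · obtain ⟨w', hwm, rfl⟩ := Finset.mem_image.1 (Finsupp.mapDomain_support hw'')
        intro x hx
        rcases List.mem_cons.1 hx with rfl | hx
        · exact ha
        · exact ih u (b :: v) (by simp at hlen ⊢; omega) hu' hv w' hwm x hx
      · obtain ⟨w', hwm, rfl⟩ := Finset.mem_image.1 (Finsupp.mapDomain_support hw'')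
        intro x hx
        rcases List.mem_cons.1 hx with rfl | hx
        · exact hb
        · exact ih (a :: u) v (by simp at hlen ⊢; omega) hu hv' w' hwm x hx
    · obtain ⟨j, hj, hwj⟩ := Finsupp.mem_support_finset_sum _ hw'
      have hLj : L a b j ≠ 0 := by
        intro h0
        rw [h0, zero_smul] at hwj
        simp at hwj
      have hjS : j ∈ S := hL a ha b hb j hLj
      have hwj' := Finsupp.support_smul hwj
      obtain ⟨w', hwm, rfl⟩ := Finset.mem_image.1 (Finsupp.mapDomain_support hwj')
      intro x hx
      rcases List.mem_cons.1 hx with rfl | hx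
      · exact hjS
      · exact ih u v (by simp at hlen ⊢; omega) hu' hv' w' hwm x hx

lemma Zb_ofFn (Q : ℕ → Polynomial ℚ) :
    ∀ (l : ℕ) (s : Fin l → ℕ) (M : ℕ),
      Zb Q M (List.ofFn s) = ∑ n ∈ Dset M l, ∏ j, Fq Q (s j) (n j) := by
  intro l
  induction l with
  | zero =>
    intro s M
    have h1 : Dset M 0 = {fun j => j.elim0} := by
      apply Finset.eq_singleton_iff_unique_mem.2
      constructor
      · refine Finset.mem_filter.2 ⟨Finset.mem_Iic.2 (fun j => j.elim0), ?_, fun j => j.elim0,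
          fun j => j.elim0⟩
        intro i j hij
        exact i.elim0
      · intro x _
        funext j; exact j.elim0
    rw [List.ofFn_zero, h1, Finset.sum_singleton]
    simp [Zb]
  | succ l ih =>
    intro s M
    rw [List.ofFn_succ]
    show (∑ k ∈ Finset.Ico 1 M, Fq Q (s 0) k * Zb Q k (List.ofFn fun i => s i.succ)) = _
    have step : ∀ k, Fq Q (s 0) k * Zb Q k (List.ofFn fun i => s i.succ) =
        ∑ m ∈ Dset k l, ∏ j : Fin (l + 1), Fq Q (s j) ((Fin.cons k m : Fin (l+1) → ℕ) j) := by
      intro k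
      rw [ih, Finset.mul_sum]
      refine Finset.sum_congr rfl fun m _ => ?_
      rw [Fin.prod_univ_succ]
      simp [Fin.cons_zero, Fin.cons_succ]
    rw [Finset.sum_congr rfl fun k _ => step k, Finset.sum_sigma']
    refine Finset.sum_nbij' (fun p => (Fin.cons p.1 p.2 : Fin (l+1) → ℕ)) (fun n => ⟨n 0, Fin.tail n⟩)
      ?_ ?_ ?_ ?_ ?_
    · rintro ⟨k, m⟩ hp
      obtain ⟨hk, hm⟩ := Finset.mem_sigma.1 hp
      rw [Finset.mem_Ico] at hk
      have hm' := Finset.mem_filter.1 hm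
      obtain ⟨hmSA, hmpos, hmlt⟩ := hm'.2
      refine Finset.mem_filter.2 ⟨Finset.mem_Iic.2 ?_, ?_, ?_, ?_⟩
      · intro j
        refine Fin.cases ?_ ?_ j
        · simpa [Fin.cons_zero] using le_of_lt hk.2
        · intro i
          simp only [Fin.cons_succ]
          exact le_trans (le_of_lt (hmlt i)) (le_of_lt hk.2)
      · intro i j hij
        rcases Fin.eq_zero_or_eq_succ j with rfl | ⟨j', rfl⟩
        · exact absurd hij (by simp)
        rcases Fin.eq_zero_or_eq_succ i with rfl | ⟨i', rfl⟩
        · simpa [Fin.cons_zero, Fin.cons_succ] using hmlt j'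
        · simp only [Fin.cons_succ]
          exact hmSA (by exact_mod_cast Fin.succ_lt_succ_iff.1 hij)
      · intro j
        refine Fin.cases ?_ ?_ j
        · simpa [Fin.cons_zero] using Nat.lt_of_lt_of_le Nat.zero_lt_one hk.1
        · intro i; simpa [Fin.cons_succ] using hmpos i
      · intro j
        refine Fin.cases ?_ ?_ j
        · simpa [Fin.cons_zero] using hk.2
        · intro i
          simp only [Fin.cons_succ]
          exact lt_trans (hmlt i) hk.2
    · intro n hn
      have hn' := Finset.mem_filter.1 hn
      obtain ⟨hSA, hpos, hlt⟩ := hn'.2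
      refine Finset.mem_sigma.2 ⟨Finset.mem_Ico.2 ⟨hpos 0, hlt 0⟩, ?_⟩
      refine Finset.mem_filter.2 ⟨Finset.mem_Iic.2 ?_, ?_, ?_, ?_⟩
      · intro j
        exact le_of_lt (hSA (Fin.succ_pos j))
      · exact hSA.comp_strictMono (Fin.strictMono_succ)
      · intro j; exact hpos _
      · intro j; exact hSA (Fin.succ_pos j)
    · rintro ⟨k, m⟩ _
      simp [Fin.tail_cons]
    · intro n _
      exact Fin.cons_self_tail n
    · rintro ⟨k, m⟩ _
      rfl

lemma Zb_stab (Q : ℕ → Polynomial ℚ) {a : ℕ} (ha : (Q a).eval 0 = 0) (w : List ℕ)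
    {i M M' : ℕ} (h1 : i < M) (h2 : M ≤ M') :
    PowerSeries.coeff i (Zb Q M (a :: w)) = PowerSeries.coeff i (Zb Q M' (a :: w)) := by
  have hsplit : Zb Q M' (a :: w) =
      Zb Q M (a :: w) + ∑ k ∈ Finset.Ico M M', Fq Q a k * Zb Q k w := by
    show (∑ k ∈ Finset.Ico 1 M', Fq Q a k * Zb Q k w) = _
    rw [← Finset.sum_Ico_consecutive _ (by omega : 1 ≤ M) h2]
    rfl
  rw [hsplit, map_add, map_sum]
  have : ∀ k ∈ Finset.Ico M M', PowerSeries.coeff i (Fq Q a k * Zb Q k w) = 0 := by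
    intro k hk
    exact coeff_Fq_mul Q a k ha _ (by have := (Finset.mem_Ico.1 hk).1; omega)
  rw [Finset.sum_congr rfl this, Finset.sum_const, smul_zero, add_zero]

lemma coeff_Zfull (Q : ℕ → Polynomial ℚ) (w : List ℕ)
    (hw : ∀ x ∈ w, (Q x).eval 0 = 0) {N M : ℕ} (hM : N < M) :
    PowerSeries.coeff N (Zfull Q w) = PowerSeries.coeff N (Zb Q M w) := by
  rw [Zfull, PowerSeries.coeff_mk]
  rcases w with _ | ⟨a, w⟩
  · rfl
  · exact Zb_stab Q (hw a (List.mem_cons_self)) w (by omega) (by omega)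

end ZQaux

lemma ZQaux.ZQ_eq (Q : ℕ → Polynomial ℚ) (l : ℕ) (s : Fin l → ℕ) :
    ZQ Q l s = ZQaux.Zfull Q (List.ofFn s) := by
  ext N
  rw [ZQ, PowerSeries.coeff_mk, ZQaux.Zfull, PowerSeries.coeff_mk, ZQaux.Zb_ofFn, map_sum]
  refine Finset.sum_congr ?_ fun n _ => rfl
  ext n
  simp only [ZQaux.Dset, Finset.mem_filter, Finset.mem_Iic, Pi.le_def]
  constructor
  · rintro ⟨h1, h2, h3⟩
    exact ⟨fun j => by have := h1 j; omega, h2, h3, fun j => by have := h1 j; omega⟩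
  · rintro ⟨h1, h2, h3, h4⟩
    exact ⟨fun j => by have := h4 j; omega, h2, h3⟩

lemma ZQaux.Zfull_mul (S : Set ℕ) (Q : ℕ → Polynomial ℚ) (L : ℕ → ℕ → ℕ → ℚ)
    (h0 : ∀ s ∈ S, (Q s).eval 0 = 0)
    (hL : ∀ a ∈ S, ∀ b ∈ S, Q a * Q b =
      ∑ j ∈ Finset.Icc 1 (a + b), Polynomial.C (L a b j) * (1 - Polynomial.X) ^ (a + b - j) * Q j)
    (hL0 : ∀ a ∈ S, ∀ b ∈ S, ∀ j, L a b j ≠ 0 → j ∈ S)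
    (u v : List ℕ) (hu : ∀ x ∈ u, x ∈ S) (hv : ∀ x ∈ v, x ∈ S) :
    ZQaux.Zfull Q u * ZQaux.Zfull Q v =
      Finsupp.linearCombination ℚ (ZQaux.Zfull Q) (ZQaux.qsh L u v) := by
  have hu0 : ∀ x ∈ u, (Q x).eval 0 = 0 := fun x hx => h0 x (hu x hx)
  have hv0 : ∀ x ∈ v, (Q x).eval 0 = 0 := fun x hx => h0 x (hv x hx)
  ext N
  rw [PowerSeries.coeff_mul]
  have step1 : ∑ p ∈ Finset.HasAntidiagonal.antidiagonal N,
      PowerSeries.coeff p.1 (ZQaux.Zfull Q u) * PowerSeries.coeff p.2 (ZQaux.Zfull Q v) =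
      PowerSeries.coeff N (ZQaux.Zb Q (N + 1) u * ZQaux.Zb Q (N + 1) v) := by
    rw [PowerSeries.coeff_mul]
    refine Finset.sum_congr rfl fun p hp => ?_
    have hpN := Finset.HasAntidiagonal.mem_antidiagonal.1 hp
    rw [ZQaux.coeff_Zfull Q u hu0 (by omega : p.1 < N + 1),
      ZQaux.coeff_Zfull Q v hv0 (by omega : p.2 < N + 1)]
  rw [step1, ZQaux.stuffle S Q L hL (u.length + v.length) u v le_rfl hu hv (N + 1)]
  simp only [Finsupp.linearCombination_apply, Finsupp.sum]
  rw [map_sum, map_sum]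
  refine Finset.sum_congr rfl fun w hw => ?_
  have hwS : ∀ x ∈ w, x ∈ S :=
    ZQaux.qsh_letters S L hL0 (u.length + v.length) u v le_rfl hu hv w hw
  have hw0 : ∀ x ∈ w, (Q x).eval 0 = 0 := fun x hx => h0 x (hwS x hx)
  rw [map_smul, map_smul, ZQaux.coeff_Zfull Q w hw0 (by omega : N < N + 1)]

/-- if the products `Q_r·Q_s` reduce as
`Q_r(t)Q_s(t) = Σ_{j ∈ S, 1 ≤ j ≤ r+s} λ_j(r,s)(1-t)^{r+s-j}Q_j(t)`, then the span
`Z(Q,S)` is closed under multiplication. -/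
theorem ZQS_mul_closed (S : Set ℕ) (Q : ℕ → Polynomial ℚ)
    (h0 : ∀ s ∈ S, (Q s).eval 0 = 0)
    (h1 : ∀ s ∈ S, (Q s).eval 1 ≠ 0)
    (hprod : ∀ r ∈ S, ∀ s ∈ S, ∃ lam : ℕ → ℚ, (∀ j, lam j ≠ 0 → j ∈ S) ∧
      Q r * Q s = ∑ j ∈ Finset.Icc 1 (r + s), C (lam j) * (1 - X) ^ (r + s - j) * Q j)
    (f g : PowerSeries ℚ)
    (hf : f ∈ Submodule.span ℚ
      {h | ∃ (l : ℕ) (s : Fin l → ℕ), (∀ j, s j ∈ S) ∧ h = ZQ Q l s})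
    (hg : g ∈ Submodule.span ℚ
      {h | ∃ (l : ℕ) (s : Fin l → ℕ), (∀ j, s j ∈ S) ∧ h = ZQ Q l s}) :
    f * g ∈ Submodule.span ℚ
      {h | ∃ (l : ℕ) (s : Fin l → ℕ), (∀ j, s j ∈ S) ∧ h = ZQ Q l s} := by
  classical
  set P : Set (PowerSeries ℚ) :=
    {h | ∃ (l : ℕ) (s : Fin l → ℕ), (∀ j, s j ∈ S) ∧ h = ZQ Q l s} with hP
  set L : ℕ → ℕ → ℕ → ℚ := fun a b j =>
    if h : a ∈ S ∧ b ∈ S then Classical.choose (hprod a h.1 b h.2) j else 0 with hLdef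
  have hL : ∀ a ∈ S, ∀ b ∈ S, Q a * Q b =
      ∑ j ∈ Finset.Icc 1 (a + b),
        Polynomial.C (L a b j) * (1 - Polynomial.X) ^ (a + b - j) * Q j := by
    intro a ha b hb
    have hspec := Classical.choose_spec (hprod a ha b hb)
    have : L a b = Classical.choose (hprod a ha b hb) := by
      funext j; rw [hLdef]; simp [ha, hb]
    rw [this]
    exact hspec.2
  have hL0 : ∀ a ∈ S, ∀ b ∈ S, ∀ j, L a b j ≠ 0 → j ∈ S := by
    intro a ha b hb j hj
    have hspec := Classical.choose_spec (hprod a ha b hb)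
    apply hspec.1 j
    rw [hLdef] at hj
    simpa [ha, hb] using hj
  have hZfull_mem : ∀ w : List ℕ, (∀ x ∈ w, x ∈ S) →
      ZQaux.Zfull Q w ∈ Submodule.span ℚ P := by
    intro w hw
    apply Submodule.subset_span
    refine ⟨w.length, w.get, fun j => hw _ (List.get_mem w j), ?_⟩
    rw [ZQaux.ZQ_eq, List.ofFn_get]
  have key : ∀ p ∈ P, ∀ r ∈ P, p * r ∈ Submodule.span ℚ P := by
    rintro p ⟨l, s, hs, rfl⟩ r ⟨m, t, ht, rfl⟩
    rw [ZQaux.ZQ_eq, ZQaux.ZQ_eq,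
      ZQaux.Zfull_mul S Q L h0 hL hL0 (List.ofFn s) (List.ofFn t)
        (fun x hx => by obtain ⟨j, rfl⟩ := List.mem_ofFn.1 hx; exact hs j)
        (fun x hx => by obtain ⟨j, rfl⟩ := List.mem_ofFn.1 hx; exact ht j)]
    rw [Finsupp.linearCombination_apply, Finsupp.sum]
    refine Submodule.sum_mem _ fun w hw => Submodule.smul_mem _ _ ?_
    refine hZfull_mem w ?_
    exact ZQaux.qsh_letters S L hL0 _ (List.ofFn s) (List.ofFn t) le_rfl
      (fun x hx => by obtain ⟨j, rfl⟩ := List.mem_ofFn.1 hx; exact hs j)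
      (fun x hx => by obtain ⟨j, rfl⟩ := List.mem_ofFn.1 hx; exact ht j) w hw
  refine Submodule.span_induction
    (p := fun x _ => x * g ∈ Submodule.span ℚ P) ?_ ?_ ?_ ?_ hf
  · intro p hp
    refine Submodule.span_induction
      (p := fun y _ => p * y ∈ Submodule.span ℚ P) ?_ ?_ ?_ ?_ hg
    · intro r hr; exact key p hp r hr
    · show p * 0 ∈ Submodule.span ℚ P
      rw [mul_zero]; exact Submodule.zero_mem _
    · intro y z _ _ hy hz
      show p * (y + z) ∈ Submodule.span ℚ P
      rw [mul_add]; exact Submodule.add_mem _ hy hz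
    · intro c y _ hy
      show p * (c • y) ∈ Submodule.span ℚ P
      rw [mul_smul_comm]; exact Submodule.smul_mem _ _ hy
  · show (0 : PowerSeries ℚ) * g ∈ Submodule.span ℚ P
    rw [zero_mul]; exact Submodule.zero_mem _
  · intro y z _ _ hy hz
    show (y + z) * g ∈ Submodule.span ℚ P
    rw [add_mul]; exact Submodule.add_mem _ hy hz
  · intro c y _ hy
    show (c • y) * g ∈ Submodule.span ℚ P
    rw [smul_mul_assoc]; exact Submodule.smul_mem _ _ hy
end

section
/- Let S ⊆ ℕ and let {Q_s}_{s∈S} be polynomials in ℚ[t] with Q_s(0) = 0. Let r,s ∈ S and suppose there exist rationals λ_j (for j ∈ S with 1 ≤ j ≤ r+s) such that Q_r(t)·Q_s(t) = Σ_{j ∈ S, 1 ≤ j ≤ r+s} λ_j·(1−t)^{r+s−j}·Q_j(t) in ℚ[t]. Then in ℚ⟦q⟧ one has Z_Q(r)·Z_Q(s) = Z_Q(r,s) + Z_Q(s,r) + Σ_{j ∈ S, 1 ≤ j ≤ r+s} λ_j·Z_Q(j). -/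
open Polynomial

open scoped Classical

noncomputable def Fser (Q : ℕ → Polynomial ℚ) (s n : ℕ) : PowerSeries ℚ :=
  Polynomial.aeval ((PowerSeries.X : PowerSeries ℚ) ^ n) (Q s) *
    ((1 - (PowerSeries.X : PowerSeries ℚ) ^ n) ^ s)⁻¹

lemma ZQ_eq (Q : ℕ → Polynomial ℚ) (l : ℕ) (s : Fin l → ℕ) :
    ZQ Q l s = PowerSeries.mk fun N =>
      ∑ n ∈ ((Finset.Iic fun _ => N : Finset (Fin l → ℕ))).filter
          (fun n => StrictAnti n ∧ ∀ j, 0 < n j),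
        PowerSeries.coeff N (∏ j, Fser Q (s j) (n j)) := rfl

lemma coeff_Fser_eq_zero (Q : ℕ → Polynomial ℚ) {c : ℕ} (hQ : (Q c).eval 0 = 0)
    {a n : ℕ} (han : a < n) : PowerSeries.coeff a (Fser Q c n) = 0 := by
  have hX : Polynomial.X ∣ Q c := Polynomial.X_dvd_iff.2 (by rwa [← Polynomial.coeff_zero_eq_eval_zero] at hQ)
  obtain ⟨R, hR⟩ := hX
  have : (PowerSeries.X : PowerSeries ℚ) ^ n ∣ Fser Q c n := by
    refine Dvd.dvd.mul_right ?_ _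
    rw [hR, map_mul, Polynomial.aeval_X]
    exact Dvd.dvd.mul_right dvd_rfl _
  exact PowerSeries.X_pow_dvd_iff.1 this a han

lemma const_one_sub_X_pow {n : ℕ} (hn : 0 < n) (k : ℕ) :
    PowerSeries.constantCoeff ((1 - (PowerSeries.X : PowerSeries ℚ) ^ n) ^ k) ≠ 0 := by
  rw [map_pow, map_sub, map_one, map_pow, PowerSeries.constantCoeff_X,
    zero_pow hn.ne', sub_zero, one_pow]
  exact one_ne_zero

lemma inv_pow_add {n : ℕ} (hn : 0 < n) (a b : ℕ) :
    (((1 - (PowerSeries.X : PowerSeries ℚ) ^ n) ^ (a + b))⁻¹ : PowerSeries ℚ) =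
      ((1 - (PowerSeries.X : PowerSeries ℚ) ^ n) ^ a)⁻¹ *
      ((1 - (PowerSeries.X : PowerSeries ℚ) ^ n) ^ b)⁻¹ := by
  set u : PowerSeries ℚ := 1 - PowerSeries.X ^ n with hu
  have hne : ∀ k : ℕ, (u ^ k) ≠ 0 := fun k h => const_one_sub_X_pow hn k (by rw [h]; simp)
  apply mul_left_cancel₀ (hne (a + b))
  rw [PowerSeries.mul_inv_cancel _ (const_one_sub_X_pow hn (a + b))]
  symm
  calc (u ^ (a+b)) * ((u^a)⁻¹ * (u^b)⁻¹)
      = (u^a * (u^a)⁻¹) * (u^b * (u^b)⁻¹) := by rw [pow_add]; ring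
    _ = 1 := by
        rw [PowerSeries.mul_inv_cancel _ (const_one_sub_X_pow hn a),
          PowerSeries.mul_inv_cancel _ (const_one_sub_X_pow hn b), one_mul]

lemma key_identity (Q : ℕ → Polynomial ℚ) (r s : ℕ) (lam : ℕ → ℚ)
    (hlam : Q r * Q s =
      ∑ j ∈ Finset.Icc 1 (r + s), C (lam j) * (1 - X) ^ (r + s - j) * Q j)
    {n : ℕ} (hn : 0 < n) :
    Fser Q r n * Fser Q s n = ∑ j ∈ Finset.Icc 1 (r + s), lam j • Fser Q j n := by
  set u : PowerSeries ℚ := 1 - PowerSeries.X ^ n with hu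
  have h1 : Fser Q r n * Fser Q s n =
      Polynomial.aeval ((PowerSeries.X : PowerSeries ℚ) ^ n) (Q r * Q s) * (u ^ (r + s))⁻¹ := by
    rw [map_mul, inv_pow_add hn r s]
    simp only [Fser]; ring
  rw [h1, hlam, map_sum, Finset.sum_mul]
  apply Finset.sum_congr rfl
  intro j hj
  have hjle : j ≤ r + s := (Finset.mem_Icc.1 hj).2
  have h2 : Polynomial.aeval ((PowerSeries.X : PowerSeries ℚ) ^ n)
      (C (lam j) * (1 - X) ^ (r + s - j) * Q j) =
      (algebraMap ℚ (PowerSeries ℚ) (lam j)) * u ^ (r + s - j) *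
        Polynomial.aeval ((PowerSeries.X : PowerSeries ℚ) ^ n) (Q j) := by
    simp [map_mul, map_pow, map_sub, map_one, Polynomial.aeval_X, Polynomial.aeval_C, hu]
  rw [h2]
  have h3 : (u ^ (r + s))⁻¹ = (u ^ (r + s - j))⁻¹ * (u ^ j)⁻¹ := by
    rw [← inv_pow_add hn, Nat.sub_add_cancel hjle]
  have h4 : u ^ (r + s - j) * (u ^ (r + s))⁻¹ = (u ^ j)⁻¹ := by
    rw [h3, ← mul_assoc, PowerSeries.mul_inv_cancel _ (const_one_sub_X_pow hn _), one_mul]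
  calc algebraMap ℚ (PowerSeries ℚ) (lam j) * u ^ (r + s - j) *
        Polynomial.aeval ((PowerSeries.X : PowerSeries ℚ) ^ n) (Q j) * (u ^ (r + s))⁻¹
      = algebraMap ℚ (PowerSeries ℚ) (lam j) *
          (Polynomial.aeval ((PowerSeries.X : PowerSeries ℚ) ^ n) (Q j) *
            (u ^ (r + s - j) * (u ^ (r + s))⁻¹)) := by ring
    _ = lam j • Fser Q j n := by
        rw [h4, ← Algebra.smul_def]; rfl

lemma strictAnti_fin_one (n : Fin 1 → ℕ) : StrictAnti n := by
  intro i j hij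
  have := Subsingleton.elim i j
  simp [this] at hij

lemma zq1_coeff (Q : ℕ → Polynomial ℚ) (c : ℕ) (hQ : (Q c).eval 0 = 0)
    {a N : ℕ} (haN : a ≤ N) :
    PowerSeries.coeff a (ZQ Q 1 (fun _ => c)) =
      ∑ m ∈ Finset.Icc 1 N, PowerSeries.coeff a (Fser Q c m) := by
  rw [ZQ_eq, PowerSeries.coeff_mk]
  have h1 : ∑ n ∈ ((Finset.Iic fun _ => a : Finset (Fin 1 → ℕ))).filter
        (fun n => StrictAnti n ∧ ∀ j, 0 < n j),
      PowerSeries.coeff a (∏ j, Fser Q c (n j)) =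
      ∑ m ∈ Finset.Icc 1 a, PowerSeries.coeff a (Fser Q c m) := by
    apply Finset.sum_nbij' (fun n => n 0) (fun m => fun _ => m)
    · intro n hn
      simp only [Finset.mem_filter, Finset.mem_Iic, Pi.le_def] at hn
      exact Finset.mem_Icc.2 ⟨hn.2.2 0, hn.1 0⟩
    · intro m hm
      simp only [Finset.mem_filter, Finset.mem_Iic, Pi.le_def, Finset.mem_Icc] at hm ⊢
      exact ⟨fun _ => hm.2, strictAnti_fin_one _, fun _ => hm.1⟩
    · intro n _; funext j; congr 1; exact Subsingleton.elim _ _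
    · intro m _; rfl
    · intro n _; rw [Fin.prod_univ_one]
  rw [h1]
  apply Finset.sum_subset
  · exact Finset.Icc_subset_Icc_right haN
  · intro m hm hma
    simp only [Finset.mem_Icc] at hm hma
    exact coeff_Fser_eq_zero Q hQ (by omega)

lemma strictAnti_fin_two (n : Fin 2 → ℕ) (h : n 1 < n 0) : StrictAnti n := by
  intro i j hij
  fin_cases i <;> fin_cases j <;> simp_all <;> omega

lemma zq2_coeff (Q : ℕ → Polynomial ℚ) (c d : ℕ) (N : ℕ) :
    PowerSeries.coeff N (ZQ Q 2 ![c, d]) =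
      ∑ p ∈ (Finset.Icc 1 N ×ˢ Finset.Icc 1 N).filter (fun p => p.2 < p.1),
        PowerSeries.coeff N (Fser Q c p.1 * Fser Q d p.2) := by
  rw [ZQ_eq, PowerSeries.coeff_mk]
  apply Finset.sum_nbij' (fun n => (n 0, n 1)) (fun p => ![p.1, p.2])
  · intro n hn
    simp only [Finset.mem_filter, Finset.mem_Iic, Pi.le_def, Finset.mem_product,
      Finset.mem_Icc] at hn ⊢
    obtain ⟨hle, hanti, hpos⟩ := hn
    exact ⟨⟨⟨hpos 0, hle 0⟩, hpos 1, hle 1⟩, hanti (by norm_num : (1:Fin 2) > 0)⟩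
  · intro p hp
    simp only [Finset.mem_filter, Finset.mem_product, Finset.mem_Icc] at hp
    simp only [Finset.mem_filter, Finset.mem_Iic, Pi.le_def]
    refine ⟨fun j => ?_, strictAnti_fin_two _ (by simpa using hp.2), fun j => ?_⟩
    · fin_cases j <;> simp [hp.1.1.2, hp.1.2.2]
    · fin_cases j <;> simp <;> omega
  · intro n _; funext j; fin_cases j <;> rfl
  · intro p _; rfl
  · intro n _
    rw [Fin.prod_univ_two]
    simp [Matrix.cons_val_zero, Matrix.cons_val_one]

/-- the length-one product formula
`Z_Q(r)·Z_Q(s) = Z_Q(r,s) + Z_Q(s,r) + Σ_j λ_j Z_Q(j)`. -/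
theorem ZQ_one_mul (S : Set ℕ) (Q : ℕ → Polynomial ℚ)
    (h0 : ∀ s ∈ S, (Q s).eval 0 = 0)
    (r s : ℕ) (hr : r ∈ S) (hs : s ∈ S) (lam : ℕ → ℚ)
    (hsupp : ∀ j, lam j ≠ 0 → j ∈ S)
    (hlam : Q r * Q s =
      ∑ j ∈ Finset.Icc 1 (r + s), C (lam j) * (1 - X) ^ (r + s - j) * Q j) :
    ZQ Q 1 (fun _ => r) * ZQ Q 1 (fun _ => s) =
      ZQ Q 2 ![r, s] + ZQ Q 2 ![s, r] +
        ∑ j ∈ Finset.Icc 1 (r + s), lam j • ZQ Q 1 (fun _ => j) := by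
  ext N
  set P : Finset (ℕ × ℕ) := Finset.Icc 1 N ×ˢ Finset.Icc 1 N with hP
  -- LHS
  have hL : PowerSeries.coeff N (ZQ Q 1 (fun _ => r) * ZQ Q 1 (fun _ => s)) =
      ∑ p ∈ P, PowerSeries.coeff N (Fser Q r p.1 * Fser Q s p.2) := by
    rw [PowerSeries.coeff_mul]
    have h1 : ∀ p ∈ Finset.HasAntidiagonal.antidiagonal N,
        PowerSeries.coeff p.1 (ZQ Q 1 (fun _ => r)) *
          PowerSeries.coeff p.2 (ZQ Q 1 (fun _ => s)) =
        ∑ p' ∈ P, PowerSeries.coeff p.1 (Fser Q r p'.1) *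
          PowerSeries.coeff p.2 (Fser Q s p'.2) := by
      intro p hp
      have hp' := Finset.HasAntidiagonal.mem_antidiagonal.1 hp
      rw [zq1_coeff Q r (h0 r hr) (show p.1 ≤ N by omega),
        zq1_coeff Q s (h0 s hs) (show p.2 ≤ N by omega),
        Finset.sum_mul_sum, ← Finset.sum_product']
    rw [Finset.sum_congr rfl h1, Finset.sum_comm]
    exact Finset.sum_congr rfl fun p' _ => (PowerSeries.coeff_mul N _ _).symm
  rw [hL]
  -- split
  have hsplit : ∑ p ∈ P, PowerSeries.coeff N (Fser Q r p.1 * Fser Q s p.2) =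
      (∑ p ∈ P.filter (fun p => p.2 < p.1),
        PowerSeries.coeff N (Fser Q r p.1 * Fser Q s p.2)) +
      (∑ p ∈ P.filter (fun p => p.1 < p.2),
        PowerSeries.coeff N (Fser Q r p.1 * Fser Q s p.2)) +
      (∑ p ∈ P.filter (fun p => p.1 = p.2),
        PowerSeries.coeff N (Fser Q r p.1 * Fser Q s p.2)) := by
    rw [← Finset.sum_filter_add_sum_filter_not P (fun p => p.2 < p.1), add_assoc]
    congr 1
    rw [← Finset.sum_filter_add_sum_filter_not (P.filter (fun p => ¬ p.2 < p.1))
      (fun p => p.1 < p.2), Finset.filter_filter, Finset.filter_filter]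
    congr 1
    · congr 1
      apply Finset.filter_congr
      intro p _
      constructor <;> omega
    · congr 1
      apply Finset.filter_congr
      intro p _
      constructor <;> omega
  rw [hsplit]
  -- match the three pieces
  have hA : ∑ p ∈ P.filter (fun p => p.2 < p.1),
      PowerSeries.coeff N (Fser Q r p.1 * Fser Q s p.2) =
      PowerSeries.coeff N (ZQ Q 2 ![r, s]) := (zq2_coeff Q r s N).symm
  have hB : ∑ p ∈ P.filter (fun p => p.1 < p.2),
      PowerSeries.coeff N (Fser Q r p.1 * Fser Q s p.2) =
      PowerSeries.coeff N (ZQ Q 2 ![s, r]) := by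
    rw [zq2_coeff Q s r N]
    apply Finset.sum_nbij' (fun p => (p.2, p.1)) (fun p => (p.2, p.1))
    · intro p hp
      simp only [hP, Finset.mem_filter, Finset.mem_product] at hp ⊢
      exact ⟨⟨hp.1.2, hp.1.1⟩, hp.2⟩
    · intro p hp
      simp only [hP, Finset.mem_filter, Finset.mem_product] at hp ⊢
      exact ⟨⟨hp.1.2, hp.1.1⟩, hp.2⟩
    · intro p _; rfl
    · intro p _; rfl
    · intro p _; rw [mul_comm]
  have hC : ∑ p ∈ P.filter (fun p => p.1 = p.2),
      PowerSeries.coeff N (Fser Q r p.1 * Fser Q s p.2) =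
      PowerSeries.coeff N (∑ j ∈ Finset.Icc 1 (r + s), lam j • ZQ Q 1 (fun _ => j)) := by
    have hdiag : ∑ p ∈ P.filter (fun p => p.1 = p.2),
        PowerSeries.coeff N (Fser Q r p.1 * Fser Q s p.2) =
        ∑ m ∈ Finset.Icc 1 N, PowerSeries.coeff N (Fser Q r m * Fser Q s m) := by
      apply Finset.sum_nbij' (fun p => p.1) (fun m => (m, m))
      · intro p hp
        simp only [hP, Finset.mem_filter, Finset.mem_product] at hp
        exact hp.1.1
      · intro m hm
        simp only [hP, Finset.mem_filter, Finset.mem_product]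
        exact ⟨⟨hm, hm⟩, trivial⟩
      · intro p hp
        simp only [hP, Finset.mem_filter] at hp
        exact Prod.ext rfl hp.2
      · intro m _; rfl
      · intro p hp
        simp only [hP, Finset.mem_filter] at hp
        rw [hp.2]
    rw [hdiag]
    have hkey : ∀ m ∈ Finset.Icc 1 N,
        PowerSeries.coeff N (Fser Q r m * Fser Q s m) =
        ∑ j ∈ Finset.Icc 1 (r + s), lam j * PowerSeries.coeff N (Fser Q j m) := by
      intro m hm
      rw [key_identity Q r s lam hlam (Finset.mem_Icc.1 hm).1, map_sum]
      exact Finset.sum_congr rfl fun j _ => by rw [map_smul, smul_eq_mul]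
    rw [Finset.sum_congr rfl hkey, Finset.sum_comm, map_sum]
    apply Finset.sum_congr rfl
    intro j _
    rw [map_smul, smul_eq_mul, ← Finset.mul_sum]
    by_cases hj : lam j = 0
    · rw [hj, zero_mul, zero_mul]
    · rw [zq1_coeff Q j (h0 j (hsupp j hj)) (le_refl N)]
  rw [hA, hB, hC, map_add, map_add]
end

section
/- For all integers r,s ≥ 1 and every integer n ≥ 1: Σ_{a=1}^{n−1} a^{r−1}(n−a)^{s−1} / ((r−1)!(s−1)!) = Σ_{j=1}^{r} λ^j_{r,s}·n^{j−1}/(j−1)! + Σ_{j=1}^{s} λ^j_{s,r}·n^{j−1}/(j−1)! + n^{r+s−1}/(r+s−1)!. (This is the coefficientwise form of the quasi-shuffle identity Q^E_r(t)·Q^E_s(t) = Σ_{j=1}^r λ^j_{r,s}(1−t)^{r+s−j}Q^E_j(t) + Σ_{j=1}^s λ^j_{s,r}(1−t)^{r+s−j}Q^E_j(t) + Q^E_{r+s}(t) for the normalized Eulerian polynomials.) -/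
open Polynomial

open scoped Classical

open Finset in
private lemma icc_to_range' (m : ℕ) (f : ℕ → ℚ) :
    ∑ j ∈ Finset.Icc 1 m, f j = ∑ i ∈ Finset.range m, f (i + 1) := by
  rw [← Finset.Ico_add_one_right_eq_Icc, Finset.sum_Ico_eq_sum_range]
  simp [Nat.add_comm]

private lemma lam_succ' (r s i : ℕ) : lam (r+1) s (i+1) = lam r s i := by
  simp only [lam]
  rw [show r + 1 + s - (i+1) = r + s - i by omega,
      show r + 1 - (i+1) = r - i by omega]

private lemma key1' (r s i : ℕ) (hi : i < r) (hs : 1 ≤ s) :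
    (s : ℚ) * lam r (s+1) (i+1) = ((i : ℚ) - r) * lam r s i := by
  obtain ⟨t, rfl⟩ : ∃ t, s = t + 1 := ⟨s - 1, by omega⟩
  simp only [lam]
  rw [show r + (t+1+1) - (i+1) = r + t + 1 - i by omega,
      show r + (t+1) - i = r + t + 1 - i by omega,
      show r - (i+1) = r - i - 1 by omega,
      show t + 1 + 1 - 1 = t + 1 by omega,
      show t + 1 - 1 = t by omega]
  have hc := Nat.choose_succ_right_eq (r + t + 1 - i - 1) (r - i - 1)
  rw [show r - i - 1 + 1 = r - i by omega,
      show r + t + 1 - i - 1 - (r - i - 1) = t + 1 by omega] at hc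
  have h2 : ((r - i : ℕ) : ℚ) = (r:ℚ) - i := Nat.cast_sub hi.le
  have hcq : ((r + t + 1 - i - 1).choose (r - i) : ℚ) * ((r:ℚ) - i) =
      ((r + t + 1 - i - 1).choose (r - i - 1) : ℚ) * ((t:ℚ) + 1) := by
    rw [← h2, ← Nat.cast_mul, hc]; push_cast; ring
  rw [pow_succ]
  linear_combination (norm := (push_cast; ring1)) (-(1:ℚ))^t * _root_.bernoulli (r + t + 1 - i) /
    ((r + t + 1 - i).factorial) * hcq

private lemma sumI' (r s : ℕ) (hs : 1 ≤ s) (x : ℚ) :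
    (s : ℚ) * (∑ i ∈ Finset.range r, lam r (s+1) (i+1) * x ^ i / (i.factorial : ℚ))
      + (r : ℚ) * (∑ i ∈ Finset.range (r+1), lam (r+1) s (i+1) * x ^ i / (i.factorial : ℚ))
      = x * ∑ i ∈ Finset.range r, lam r s (i+1) * x ^ i / (i.factorial : ℚ) := by
  have hR : x * ∑ i ∈ Finset.range r, lam r s (i+1) * x ^ i / (i.factorial : ℚ)
      = ∑ i ∈ Finset.range (r+1), (i : ℚ) * lam r s i * x ^ i / (i.factorial : ℚ) := by
    rw [Finset.mul_sum,
      Finset.sum_range_succ' (fun i => (i : ℚ) * lam r s i * x ^ i / (i.factorial : ℚ)) r]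
    simp only [Nat.cast_zero, zero_mul, zero_div, add_zero]
    refine Finset.sum_congr rfl fun i _ => ?_
    rw [Nat.factorial_succ, pow_succ]
    have h0 : ((i.factorial : ℚ)) ≠ 0 := Nat.cast_ne_zero.mpr i.factorial_ne_zero
    have h1 : ((i:ℚ) + 1) ≠ 0 := by positivity
    push_cast
    field_simp
  rw [hR]
  simp only [lam_succ']
  rw [Finset.mul_sum, Finset.mul_sum,
    Finset.sum_range_succ (fun i => (r:ℚ) * (lam r s i * x ^ i / (i.factorial : ℚ))),
    Finset.sum_range_succ (fun i => (i : ℚ) * lam r s i * x ^ i / (i.factorial : ℚ))]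
  rw [← add_assoc, ← Finset.sum_add_distrib]
  congr 1
  · refine Finset.sum_congr rfl fun i hi => ?_
    have := key1' r s i (Finset.mem_range.mp hi) hs
    linear_combination (x ^ i / (i.factorial : ℚ)) * this
  · ring

private lemma star' (r s n : ℕ) (hr : 1 ≤ r) (hs : 1 ≤ s) :
    (s:ℚ) * ((∑ j ∈ Finset.Icc 1 r, lam r (s+1) j * (n:ℚ)^(j-1)/((j-1).factorial : ℚ))
      + (∑ j ∈ Finset.Icc 1 (s+1), lam (s+1) r j * (n:ℚ)^(j-1)/((j-1).factorial : ℚ))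
      + (n:ℚ)^(r+(s+1)-1)/(((r+(s+1)-1).factorial : ℚ)))
    + (r:ℚ) * ((∑ j ∈ Finset.Icc 1 (r+1), lam (r+1) s j * (n:ℚ)^(j-1)/((j-1).factorial : ℚ))
      + (∑ j ∈ Finset.Icc 1 s, lam s (r+1) j * (n:ℚ)^(j-1)/((j-1).factorial : ℚ))
      + (n:ℚ)^((r+1)+s-1)/((((r+1)+s-1).factorial : ℚ)))
    = (n:ℚ) * ((∑ j ∈ Finset.Icc 1 r, lam r s j * (n:ℚ)^(j-1)/((j-1).factorial : ℚ))
      + (∑ j ∈ Finset.Icc 1 s, lam s r j * (n:ℚ)^(j-1)/((j-1).factorial : ℚ))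
      + (n:ℚ)^(r+s-1)/(((r+s-1).factorial : ℚ))) := by
  simp only [icc_to_range', Nat.add_sub_cancel]
  rw [show r+(s+1)-1 = r+s by omega, show (r+1)+s-1 = r+s by omega]
  have htop : (s:ℚ) * ((n:ℚ)^(r+s)/(((r+s).factorial : ℚ)))
      + (r:ℚ) * ((n:ℚ)^(r+s)/(((r+s).factorial : ℚ)))
      = (n:ℚ) * ((n:ℚ)^(r+s-1)/(((r+s-1).factorial : ℚ))) := by
    rw [show r+s = (r+s-1)+1 by omega, pow_succ, Nat.factorial_succ]
    have h0 : (((r+s-1).factorial : ℚ)) ≠ 0 := Nat.cast_ne_zero.mpr (Nat.factorial_ne_zero _)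
    have h1 : ((r+s-1 : ℕ) : ℚ) + 1 ≠ 0 := by positivity
    have h2 : (s:ℚ) + r ≠ 0 := by norm_cast; omega
    push_cast [Nat.cast_sub (show 1 ≤ r+s by omega)]
    field_simp
    rw [show (r:ℚ)+s-1+1 = s+r by ring, mul_div_assoc, div_self h2, mul_one]
  linear_combination sumI' r s hs n + sumI' s r hr n + htop

private lemma bernoulli_odd_zero' (m : ℕ) (h : Odd m) (h1 : 1 < m) : _root_.bernoulli m = 0 := by
  rw [bernoulli_eq_bernoulli'_of_ne_one (by omega), bernoulli'_eq_zero_of_odd h h1]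

private lemma base' (p n : ℕ) (hn : 1 ≤ n) :
    (∑ a ∈ Finset.Ico 1 n, (a:ℚ)^p) / (p.factorial : ℚ)
      = (∑ j ∈ Finset.Icc 1 (p+1), lam (p+1) 1 j * (n:ℚ)^(j-1)/((j-1).factorial:ℚ))
        + lam 1 (p+1) 1 + (n:ℚ)^(p+1)/(((p+1).factorial:ℚ)) := by
  set F : ℕ → ℚ := fun i =>
    _root_.bernoulli i * (n:ℚ)^(p+1-i) / ((i.factorial:ℚ) * ((p+1-i).factorial:ℚ)) with hFdef
  have hL : ∑ a ∈ Finset.Ico 1 n, (a:ℚ)^p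
      = (∑ a ∈ Finset.range n, (a:ℚ)^p) - (0:ℚ)^p := by
    rw [Finset.range_eq_Ico, Finset.sum_eq_sum_Ico_succ_bot hn (fun a => (a:ℚ)^p)]
    push_cast
    ring
  have hF : (∑ i ∈ Finset.range (p+1),
        _root_.bernoulli i * ((p + 1).choose i) * (n : ℚ) ^ (p + 1 - i) / (p + 1)) /
        (p.factorial : ℚ)
      = ∑ i ∈ Finset.range (p+1), F i := by
    rw [Finset.sum_div]
    refine Finset.sum_congr rfl fun i hi => ?_
    have hip : i ≤ p + 1 := by have := Finset.mem_range.mp hi; omega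
    have hfac := Nat.choose_mul_factorial_mul_factorial hip
    have h1 : ((i.factorial : ℚ)) ≠ 0 := Nat.cast_ne_zero.mpr (Nat.factorial_ne_zero _)
    have h2 : (((p+1-i).factorial : ℚ)) ≠ 0 := Nat.cast_ne_zero.mpr (Nat.factorial_ne_zero _)
    have h3 : ((p.factorial : ℚ)) ≠ 0 := Nat.cast_ne_zero.mpr (Nat.factorial_ne_zero _)
    have h4 : ((p:ℚ) + 1) ≠ 0 := by positivity
    have hfq : (((p+1).choose i : ℚ)) * (i.factorial:ℚ) * ((p+1-i).factorial:ℚ)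
        = ((p:ℚ)+1) * (p.factorial:ℚ) := by
      exact_mod_cast congrArg (fun k : ℕ => (k:ℚ)) (by rw [hfac, Nat.factorial_succ])
    simp only [hFdef]
    field_simp
    linear_combination _root_.bernoulli i * hfq
  have hR1 : (∑ j ∈ Finset.Icc 1 (p+1), lam (p+1) 1 j * (n:ℚ)^(j-1)/((j-1).factorial:ℚ))
      = ∑ i ∈ Finset.range (p+1), F (p+1-i) := by
    rw [icc_to_range']
    refine Finset.sum_congr rfl fun i hi => ?_
    have hip : i ≤ p := by have := Finset.mem_range.mp hi; omega
    simp only [Nat.add_sub_cancel, hFdef]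
    rw [lam, show p+1+1-(i+1)-1 = p+1-(i+1) by omega, show p+1-(i+1) = p - i by omega,
      show p+1+1-(i+1) = p+1-i by omega, Nat.choose_self,
      show p+1-(p+1-i) = i by omega, show (1:ℕ)-1 = 0 by rfl]
    norm_num
    ring
  have hrefl : ∑ i ∈ Finset.range (p+1+1), F (p+1-i) = ∑ i ∈ Finset.range (p+1+1), F i := by
    have := Finset.sum_range_reflect F (p+1+1)
    simpa only [Nat.add_sub_cancel] using this
  have hshift : ∑ i ∈ Finset.range (p+1), F (p+1-i)
      = (∑ i ∈ Finset.range (p+1), F i) + F (p+1) - F 0 := by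
    have h5 := Finset.sum_range_succ (fun i => F (p+1-i)) (p+1)
    simp only [Nat.sub_self] at h5
    have h6 := Finset.sum_range_succ F (p+1)
    rw [hrefl, h6] at h5
    linarith [h5]
  have hF0 : F 0 = (n:ℚ)^(p+1)/(((p+1).factorial:ℚ)) := by
    simp [hFdef, _root_.bernoulli_zero]
  have hFtop : F (p+1) = _root_.bernoulli (p+1) / ((p+1).factorial:ℚ) := by
    simp [hFdef]
  have hlam : lam 1 (p+1) 1 = (-1:ℚ)^p * _root_.bernoulli (p+1) / ((p+1).factorial:ℚ) := by
    rw [lam, show 1+(p+1)-1-1 = p by omega, show (1:ℕ)-1 = 0 by rfl,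
      show 1+(p+1)-1 = p+1 by omega, Nat.choose_zero_right, Nat.add_sub_cancel]
    norm_num
  have hfin : (0:ℚ)^p / (p.factorial:ℚ)
      + (1 + (-1:ℚ)^p) * _root_.bernoulli (p+1) / ((p+1).factorial:ℚ) = 0 := by
    rcases Nat.eq_zero_or_pos p with hp | hp
    · subst hp; norm_num [_root_.bernoulli_one]
    · rw [zero_pow (by omega), zero_div, zero_add]
      rcases Nat.even_or_odd p with he | ho
      · rw [bernoulli_odd_zero' (p+1) (Even.add_one he) (by omega)]
        ring
      · rw [Odd.neg_one_pow ho]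
        ring
  rw [hL, sum_range_pow n p, sub_div, hF, hR1, hshift, hF0, hFtop, hlam]
  linear_combination -hfin

/-- the coefficientwise quasi-shuffle identity for the normalized
Eulerian polynomials, with the Bernoulli-number coefficients `λ^j_{a,b}`. -/
theorem quasi_shuffle_coeff (r s n : ℕ) (hr : 1 ≤ r) (hs : 1 ≤ s) (hn : 1 ≤ n) :
    ∑ a ∈ Finset.Ico 1 n, (a : ℚ) ^ (r - 1) * ((n - a : ℕ) : ℚ) ^ (s - 1) /
        ((r - 1).factorial * (s - 1).factorial) =
      (∑ j ∈ Finset.Icc 1 r, lam r s j * (n : ℚ) ^ (j - 1) / (j - 1).factorial) +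
        (∑ j ∈ Finset.Icc 1 s, lam s r j * (n : ℚ) ^ (j - 1) / (j - 1).factorial) +
        (n : ℚ) ^ (r + s - 1) / (r + s - 1).factorial := by
  induction s, hs using Nat.le_induction generalizing r hr with
  | base =>
    obtain ⟨p, rfl⟩ : ∃ p, r = p + 1 := ⟨r - 1, by omega⟩
    have hbase := base' p n hn
    rw [Finset.sum_div] at hbase
    simp only [Nat.add_sub_cancel, Nat.sub_self, pow_zero, Nat.factorial_zero, Nat.cast_one,
      mul_one, Finset.Icc_self, Finset.sum_singleton, div_one]
    exact hbase
  | succ s hs IH =>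
    have hs0 : ((s:ℚ)) ≠ 0 := Nat.cast_ne_zero.mpr (by omega)
    apply mul_left_cancel₀ hs0
    rw [Finset.mul_sum]
    have hpt : ∀ a ∈ Finset.Ico 1 n,
        (s:ℚ) * ((a : ℚ) ^ (r - 1) * ((n - a : ℕ) : ℚ) ^ (s + 1 - 1) /
          (((r - 1).factorial : ℚ) * (((s + 1 - 1).factorial : ℚ))))
        = (n:ℚ) * ((a : ℚ) ^ (r - 1) * ((n - a : ℕ) : ℚ) ^ (s - 1) /
            (((r - 1).factorial : ℚ) * (((s - 1).factorial : ℚ))))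
          - (r:ℚ) * ((a : ℚ) ^ (r + 1 - 1) * ((n - a : ℕ) : ℚ) ^ (s - 1) /
            (((r + 1 - 1).factorial : ℚ) * (((s - 1).factorial : ℚ)))) := by
      intro a ha
      obtain ⟨ha1, ha2⟩ := Finset.mem_Ico.mp ha
      have hcast : ((n - a : ℕ):ℚ) = (n:ℚ) - a := Nat.cast_sub ha2.le
      simp only [Nat.add_sub_cancel]
      have hsp : ((n - a : ℕ):ℚ)^s = ((n - a : ℕ):ℚ)^(s-1) * ((n:ℚ) - a) := by
        conv_lhs => rw [show s = (s-1)+1 by omega]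
        rw [pow_succ, hcast]
      have hap : (a:ℚ)^r = (a:ℚ)^(r-1) * a := by
        conv_lhs => rw [show r = (r-1)+1 by omega]
        rw [pow_succ]
      have hfs : (s:ℚ) * (((s-1).factorial):ℚ) = (s.factorial:ℚ) := by
        exact_mod_cast congrArg (fun k:ℕ => (k:ℚ)) (Nat.mul_factorial_pred (by omega))
      have hfr : (r:ℚ) * (((r-1).factorial):ℚ) = (r.factorial:ℚ) := by
        exact_mod_cast congrArg (fun k:ℕ => (k:ℚ)) (Nat.mul_factorial_pred (by omega))
      rw [hsp, hap, ← hfs, ← hfr]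
      have h1 : (((r-1).factorial : ℚ)) ≠ 0 := Nat.cast_ne_zero.mpr (Nat.factorial_ne_zero _)
      have h2 : (((s-1).factorial : ℚ)) ≠ 0 := Nat.cast_ne_zero.mpr (Nat.factorial_ne_zero _)
      have h3 : ((r:ℚ)) ≠ 0 := Nat.cast_ne_zero.mpr (by omega)
      field_simp
    rw [Finset.sum_congr rfl hpt, Finset.sum_sub_distrib, ← Finset.mul_sum, ← Finset.mul_sum,
      IH r hr, IH (r+1) (by omega)]
    linear_combination -star' r s n hr hs
end
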